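/- arXiv:2210.04667 — 4 statements merged into one kernel-verified Lean document; each statement's English description precedes it below -/
import Mathlib

section
/- Assume Assumptions (I) and (II), R₀ < ∞ and R₀ > 𝔼[1/γ*], and suppose in addition that γ(t) = γ*·1{t ≥ ζ} for all t, where ζ is a random variable with ζ ≥ η a.s. and 𝔼[ζ] < ∞, and γ* is a random variable taking values in (0,1]. Then the unique positive solution F̄* of the equation ∫₀^∞ 𝔼[exp(−∫₀ˢ γ(r/F̄*) dr)] ds = R₀ is F̄* = (R₀ − 𝔼[1/γ*])/𝔼[ζ], and the corresponding endemic value Ī* := 𝔼[η]·F̄*/R₀ equals (𝔼[η]/𝔼[ζ])·(1 − 𝔼[1/γ*]/R₀). -/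
open MeasureTheory Filter Set ProbabilityTheory
open scoped ENNReal

noncomputable section

/-- A real function is càdlàg on `[0, ∞)`: right-continuous on `[0,∞)` with left limits. -/
def Cadlag (f : ℝ → ℝ) : Prop :=
  (∀ t : ℝ, 0 ≤ t → ContinuousWithinAt f (Set.Ici t) t) ∧
  (∀ t : ℝ, 0 < t → ∃ l : ℝ, Filter.Tendsto f (nhdsWithin t (Set.Iio t)) (nhds l))

variable {Ω : Type*} [MeasurableSpace Ω]

/-- `η(ω) = sup {t ≥ 0 : λ(ω,t) > 0}`, with the convention `sup ∅ = 0`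
(which is the junk value of `sSup` on `ℝ`). -/
def etaSup (lam : Ω → ℝ → ℝ) (ω : Ω) : ℝ :=
  sSup {t : ℝ | 0 ≤ t ∧ 0 < lam ω t}

/-- `γ* (ω) = lim_{t → ∞} γ(ω,t) = sup_{t ≥ 0} γ(ω,t)` for a.s. non-decreasing bounded `γ`. -/
def gamStar (gam : Ω → ℝ → ℝ) (ω : Ω) : ℝ :=
  sSup (gam ω '' Set.Ici (0:ℝ))

/-- `λ̄(t) = 𝔼[λ(t)]`. -/
def lamBar (P : Measure Ω) (lam : Ω → ℝ → ℝ) (t : ℝ) : ℝ :=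
  ∫ ω, lam ω t ∂P

/-- `Ī(0) = ℙ(η₀ > 0)`. -/
def IbarZero (P : Measure Ω) (lam0 : Ω → ℝ → ℝ) : ℝ :=
  (P {ω | 0 < etaSup lam0 ω}).toReal

/-- `λ̄₀(t) = 𝔼[λ₀(t) | η₀ > 0]`. -/
def lamBarZero (P : Measure Ω) (lam0 : Ω → ℝ → ℝ) (t : ℝ) : ℝ :=
  (∫ ω in {ω | 0 < etaSup lam0 ω}, lam0 ω t ∂P) / IbarZero P lam0

/-- `F₀ᶜ(t) = ℙ(η₀ > t | η₀ > 0)`. -/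
def FZeroc (P : Measure Ω) (lam0 : Ω → ℝ → ℝ) (t : ℝ) : ℝ :=
  (P {ω | t < etaSup lam0 ω}).toReal / IbarZero P lam0

/-- `Fᶜ(t) = ℙ(η > t)`. -/
def survFc (P : Measure Ω) (lam : Ω → ℝ → ℝ) (t : ℝ) : ℝ :=
  (P {ω | t < etaSup lam ω}).toReal

/-- `R₀ = ∫₀^∞ λ̄(t) dt`. -/
def Rnought (P : Measure Ω) (lam : Ω → ℝ → ℝ) : ℝ :=
  ∫ t in Set.Ioi (0:ℝ), lamBar P lam t

/-- `𝔼[1/γ*] ∈ (0,∞]`, with the convention `1/0 = ∞`. -/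
def EinvGamStar (P : Measure Ω) (gam : Ω → ℝ → ℝ) : ℝ≥0∞ :=
  ∫⁻ ω, (ENNReal.ofReal (gamStar gam ω))⁻¹ ∂P

/-- The pair of integral equations defining the limit epidemic system. -/
def SolvesLimitSystem (P : Measure Ω) (lam0 gam0 lam gam : Ω → ℝ → ℝ)
    (S F : ℝ → ℝ) : Prop :=
  (∀ t : ℝ, 0 ≤ t →
    S t = (∫ ω, gam0 ω t * Real.exp (- ∫ r in (0:ℝ)..t, gam0 ω r * F r) ∂P)
      + ∫ s in (0:ℝ)..t,
          (∫ ω, gam ω (t - s) * Real.exp (- ∫ r in s..t, gam ω (r - s) * F r) ∂P)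
            * (S s * F s)) ∧
  (∀ t : ℝ, 0 ≤ t →
    F t = IbarZero P lam0 * lamBarZero P lam0 t
      + ∫ s in (0:ℝ)..t, lamBar P lam (t - s) * (S s * F s))

/-- A solution of the limit epidemic system with càdlàg nonnegative components. -/
def IsLimitSolution (P : Measure Ω) (lam0 gam0 lam gam : Ω → ℝ → ℝ)
    (S F : ℝ → ℝ) : Prop :=
  Cadlag S ∧ Cadlag F ∧ (∀ t : ℝ, 0 ≤ t → 0 ≤ S t ∧ 0 ≤ F t) ∧
  SolvesLimitSystem P lam0 gam0 lam gam S F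

/-- The standing assumptions on the random infectivity/susceptibility functions:
measurability, càdlàg paths, the bounds `0 ≤ λ₀, λ ≤ λ*`, `0 ≤ γ₀, γ ≤ 1`, and the a.s.
support condition `sup{t : λ(t) > 0} ≤ inf{t : γ(t) > 0}` (for both pairs). -/
def BaseContext (P : Measure Ω) (lamStar : ℝ) (lam0 gam0 lam gam : Ω → ℝ → ℝ) : Prop :=
  0 < lamStar ∧
  Measurable (Function.uncurry lam0) ∧ Measurable (Function.uncurry gam0) ∧
  Measurable (Function.uncurry lam) ∧ Measurable (Function.uncurry gam) ∧
  (∀ᵐ ω ∂P, Cadlag (lam0 ω) ∧ Cadlag (gam0 ω) ∧ Cadlag (lam ω) ∧ Cadlag (gam ω)) ∧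
  (∀ᵐ ω ∂P, ∀ t : ℝ, 0 ≤ t →
    lam0 ω t ∈ Set.Icc 0 lamStar ∧ lam ω t ∈ Set.Icc 0 lamStar ∧
    gam0 ω t ∈ Set.Icc (0:ℝ) 1 ∧ gam ω t ∈ Set.Icc (0:ℝ) 1) ∧
  (∀ᵐ ω ∂P, ∀ s t : ℝ, 0 ≤ s → 0 ≤ t → 0 < lam ω s → 0 < gam ω t → s ≤ t) ∧
  (∀ᵐ ω ∂P, ∀ s t : ℝ, 0 ≤ s → 0 ≤ t → 0 < lam0 ω s → 0 < gam0 ω t → s ≤ t)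

/-- Assumption (I): `γ` and `γ₀` have a.s. non-decreasing paths, and `(λ₀, γ₀)` is built from
an independent pair `(λ̃, γ̃) ~ (λ, γ)`, an age `ξ ∈ [0, η̃]` and a Bernoulli variable `χ`
with `ℙ(χ = 1) = Ī(0)`, via `λ₀(t) = χ λ̃(t+ξ)` and `γ₀(t) = (1-χ) + χ γ̃(t+ξ)`. -/
def AssumptionI (P : Measure Ω) (lam0 gam0 lam gam : Ω → ℝ → ℝ) : Prop :=
  (∀ᵐ ω ∂P, MonotoneOn (gam ω) (Set.Ici 0) ∧ MonotoneOn (gam0 ω) (Set.Ici 0)) ∧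
  ∃ (lamT gamT : Ω → ℝ → ℝ) (xi chi : Ω → ℝ),
    Measurable (fun ω => (lamT ω, gamT ω)) ∧ Measurable xi ∧ Measurable chi ∧
    Measure.map (fun ω => (lamT ω, gamT ω)) P = Measure.map (fun ω => (lam ω, gam ω)) P ∧
    (∀ᵐ ω ∂P, 0 ≤ xi ω ∧ xi ω ≤ etaSup lamT ω) ∧
    (∀ ω, chi ω = 0 ∨ chi ω = 1) ∧
    P {ω | chi ω = 1} = P {ω | 0 < etaSup lam0 ω} ∧
    IndepFun chi (fun ω => (lamT ω, gamT ω, xi ω)) P ∧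
    (∀ᵐ ω ∂P, ∀ t : ℝ, 0 ≤ t →
      lam0 ω t = chi ω * lamT ω (t + xi ω) ∧
      gam0 ω t = (1 - chi ω) + chi ω * gamT ω (t + xi ω))

/-- Assumption (II): there is a nonnegative integrable random time `t*` such that a.s.
`γ(t) ≥ γ*/2` for all `t ≥ t*`. -/
def AssumptionII (P : Measure Ω) (gam : Ω → ℝ → ℝ) : Prop :=
  ∃ tstar : Ω → ℝ, Measurable tstar ∧ (∀ᵐ ω ∂P, 0 ≤ tstar ω) ∧ Integrable tstar P ∧
    ∀ᵐ ω ∂P, ∀ t : ℝ, tstar ω ≤ t → gamStar gam ω / 2 ≤ gam ω t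

/-- Assumption (III): `γ*` is deterministic, and for any `δ ∈ (0,1)` there is a deterministic
`t_δ > 0` with `min(γ₀(t_δ), γ(t_δ)) ≥ (1-δ) γ*` a.s. -/
def AssumptionIII (P : Measure Ω) (gam0 gam : Ω → ℝ → ℝ) : Prop :=
  (∃ c : ℝ, ∀ᵐ ω ∂P, gamStar gam ω = c) ∧
  (∀ δ : ℝ, δ ∈ Set.Ioo (0:ℝ) 1 → ∃ tδ : ℝ, 0 < tδ ∧
    ∀ᵐ ω ∂P, (1 - δ) * gamStar gam ω ≤ min (gam0 ω tδ) (gam ω tδ))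

/-- Assumption (IV): there is a positive decreasing `h` with `h(0) = 1` and
`λ̄(s+t) ≥ h(s) λ̄(t)`, `λ̄₀(s+t) ≥ h(s) λ̄₀(t)`; moreover `λ̄₀` is continuous. -/
def AssumptionIV (lamBarF lamBarZeroF : ℝ → ℝ) : Prop :=
  (∃ h : ℝ → ℝ, (∀ s : ℝ, 0 ≤ s → 0 < h s) ∧ AntitoneOn h (Set.Ici 0) ∧ h 0 = 1 ∧
    ∀ s t : ℝ, 0 ≤ s → 0 ≤ t →
      h s * lamBarF t ≤ lamBarF (s + t) ∧ h s * lamBarZeroF t ≤ lamBarZeroF (s + t)) ∧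
  ContinuousOn lamBarZeroF (Set.Ici 0)

/-- `H(x) = ∫₀^∞ 𝔼[exp(−∫₀ˢ γ(r/x) dr)] ds`. -/
def Hfun (P : Measure Ω) (gam : Ω → ℝ → ℝ) (x : ℝ) : ℝ :=
  ∫ s in Set.Ioi (0:ℝ), ∫ ω, Real.exp (- ∫ r in (0:ℝ)..s, gam ω (r / x)) ∂P

/-- `Ī(t) = Ī(0) F₀ᶜ(t) + ∫₀ᵗ Fᶜ(t-s) S̄(s) F̄(s) ds`. -/
def IbarFun (P : Measure Ω) (lam0 lam : Ω → ℝ → ℝ) (S F : ℝ → ℝ) (t : ℝ) : ℝ :=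
  IbarZero P lam0 * FZeroc P lam0 t
    + ∫ s in (0:ℝ)..t, survFc P lam (t - s) * (S s * F s)

/-- The SIRS integral system of the Kermack–McKendrick model (deterministic data). -/
def SolvesSIRSIntegral (lamT gamT muF Fcs I0 R0f : ℝ → ℝ) (S0 : ℝ)
    (S F : ℝ → ℝ) : Prop :=
  ∀ t : ℝ, 0 ≤ t →
    (S t = S0 * Real.exp (- ∫ r in (0:ℝ)..t, F r)
      + (∫ τ in (0:ℝ)..t, ∫ r in Set.Ioi (0:ℝ),
          gamT (t - τ) * muF (τ + r) * I0 r * Real.exp (- ∫ s in r..(τ + r), muF s)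
            * Real.exp (- ∫ s in τ..t, gamT (s - τ) * F s))
      + (∫ τ in Set.Ioi (0:ℝ),
          gamT (t + τ) * R0f τ * Real.exp (- ∫ s in (0:ℝ)..t, gamT (s + τ) * F s))
      + (∫ r in (0:ℝ)..t,
          (∫ τ in (0:ℝ)..(t - r),
            gamT (t - r - τ) * muF τ * Fcs τ
              * Real.exp (- ∫ s in (τ + r)..t, gamT (s - r - τ) * F s)) * (S r * F r))) ∧
    (F t = (∫ τ in Set.Ioi (0:ℝ), lamT (t + τ) * I0 τ * Real.exp (- ∫ s in τ..(t + τ), muF s))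
      + ∫ τ in (0:ℝ)..t, lamT (t - τ) * (S τ * F τ)
          * Real.exp (- ∫ s in (0:ℝ)..(t - τ), muF s))

/-- `Ī(t,τ)` built from a solution of the SIRS integral system. -/
def IbDef (I0 Fcs S F : ℝ → ℝ) (t τ : ℝ) : ℝ :=
  if t < τ then I0 (τ - t) * Fcs τ / Fcs (τ - t) else F (t - τ) * S (t - τ) * Fcs τ

/-- `R̄(t,0)` built from a solution of the SIRS integral system. -/
def RzeroDef (I0 fd Fcs S F : ℝ → ℝ) (t : ℝ) : ℝ :=
  (∫ τ in Set.Ioi (0:ℝ), I0 τ * fd (t + τ) / Fcs τ)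
    + ∫ τ in (0:ℝ)..t, fd (t - τ) * (S τ * F τ)

/-- `R̄(t,θ)` built from a solution of the SIRS integral system. -/
def RbDef (I0 R0f fd gamT Fcs S F : ℝ → ℝ) (t θ : ℝ) : ℝ :=
  if θ < t then
    RzeroDef I0 fd Fcs S F (t - θ) * Real.exp (- ∫ s in (0:ℝ)..θ, gamT s * F (t + s - θ))
  else R0f (θ - t) * Real.exp (- ∫ s in (θ - t)..θ, gamT s * F (t - θ + s))

/-- `S̄(t)` built from a solution of the SIRS integral system. -/
def SbDef (S0 : ℝ) (F : ℝ → ℝ) (t : ℝ) : ℝ :=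
  S0 * Real.exp (- ∫ r in (0:ℝ)..t, F r)


/-!
With `γ = γ* 1{t ≥ ζ}` the cumulative hazard is `∫₀ˢ γ(r/x) dr = γ* (s - xζ)⁺`, and
`∫₀^∞ e^{-γ* (s - xζ)⁺} ds = xζ + 1/γ*`. By Tonelli, `H(x) = x 𝔼[ζ] + 𝔼[1/γ*]` is affine in `x`,
so `H(x) = R₀` has exactly one positive root as soon as `𝔼[ζ] > 0`. That holds because
`ζ = 0` a.s. would make `γ > 0` from time `0` on, which by the support condition forces `λ ≤ 0`
on `(0, ∞)`, hence `R₀ ≤ 0`, contradicting `R₀ > 𝔼[1/γ*] ≥ 0`.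
-/

theorem intervalIntegral_ite_le_const {c s : ℝ} (g : ℝ) (hc : 0 ≤ c) (hs : 0 ≤ s) :
    ∫ r in (0:ℝ)..s, (if c ≤ r then g else 0) = g * max (s - c) 0 := by
  have hind : (fun r : ℝ => if c ≤ r then g else 0) = (Ici c).indicator fun _ => g := by
    ext r; simp [Set.indicator_apply]
  have hae : (Ioc 0 s ∩ Ioi c : Set ℝ) =ᵐ[volume] (Ioc 0 s ∩ Ici c : Set ℝ) :=
    (ae_eq_refl _).inter Ioi_ae_eq_Ici
  rw [hind, intervalIntegral.integral_of_le hs, integral_indicator_const _ measurableSet_Ici,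
    measureReal_restrict_apply measurableSet_Ici, inter_comm, ← measureReal_congr hae,
    Ioc_inter_Ioi, sup_eq_right.2 hc, Real.volume_real_Ioc, smul_eq_mul, mul_comm]

theorem lintegral_Ioi_exp_neg_mul_max_sub {g c : ℝ} (hg : 0 < g) (hc : 0 ≤ c) :
    ∫⁻ s in Ioi 0, ENNReal.ofReal (Real.exp (-(g * max (s - c) 0)))
      = ENNReal.ofReal (c + g⁻¹) := by
  set F : ℝ → ℝ≥0∞ := fun s => ENNReal.ofReal (Real.exp (-(g * max (s - c) 0)))
  have hhead : ∫⁻ s in Ioc 0 c, F s = ENNReal.ofReal c := by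
    rw [setLIntegral_congr_fun measurableSet_Ioc (g := fun _ => 1) fun s hs => by
      simp [F, max_eq_right (sub_nonpos.2 hs.2)]]
    simp
  have hdecay : ∀ s ∈ Ioi c, F s = ENNReal.ofReal (Real.exp (g * c) * Real.exp (-g * s)) :=
    fun s hs => by
      simp only [F, max_eq_left (sub_nonneg.2 (mem_Ioi.1 hs).le), ← Real.exp_add]
      ring_nf
  have htail : ∫⁻ s in Ioi c, F s = ENNReal.ofReal g⁻¹ := by
    rw [setLIntegral_congr_fun measurableSet_Ioi hdecay,
      ← ofReal_integral_eq_lintegral_ofReal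
        ((integrableOn_exp_mul_Ioi (neg_neg_of_pos hg) c).const_mul _)
        (ae_of_all _ fun s => by positivity),
      integral_const_mul, integral_exp_mul_Ioi (neg_neg_of_pos hg), neg_mul, Real.exp_neg]
    field_simp
  rw [← Ioc_union_Ioi_eq_Ioi hc, lintegral_union measurableSet_Ioi (Ioc_disjoint_Ioi le_rfl),
    hhead, htail, ENNReal.ofReal_add hc (inv_nonneg.2 hg.le)]

theorem integral_integral_eq_toReal_lintegral_lintegral_swap {α β : Type*} [MeasurableSpace α]
    [MeasurableSpace β] {μ : Measure α} {ν : Measure β} [SFinite μ] [IsFiniteMeasure ν]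
    {f : α → β → ℝ} (hf : Measurable (Function.uncurry f)) (hf_nonneg : ∀ a b, 0 ≤ f a b)
    (hf_le_one : ∀ a, ∀ᵐ b ∂ν, f a b ≤ 1) :
    ∫ a, ∫ b, f a b ∂ν ∂μ = (∫⁻ b, ∫⁻ a, ENNReal.ofReal (f a b) ∂μ ∂ν).toReal := by
  have hF : Measurable (Function.uncurry fun a b => ENNReal.ofReal (f a b)) := hf.ennreal_ofReal
  have hfinite : ∀ a, ∫⁻ b, ENNReal.ofReal (f a b) ∂ν < ∞ := fun a =>
    calc ∫⁻ b, ENNReal.ofReal (f a b) ∂ν ≤ ∫⁻ _, 1 ∂ν :=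
          lintegral_mono_ae ((hf_le_one a).mono fun b hb => ENNReal.ofReal_le_one.2 hb)
      _ < ∞ := by simp [measure_lt_top]
  calc ∫ a, ∫ b, f a b ∂ν ∂μ = ∫ a, (∫⁻ b, ENNReal.ofReal (f a b) ∂ν).toReal ∂μ := by
        congr 1 with a
        exact integral_eq_lintegral_of_nonneg_ae (ae_of_all _ (hf_nonneg a))
          (hf.of_uncurry_left).aestronglyMeasurable
    _ = (∫⁻ a, ∫⁻ b, ENNReal.ofReal (f a b) ∂ν ∂μ).toReal :=
        integral_toReal hF.lintegral_prod_right.aemeasurable (ae_of_all _ hfinite)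
    _ = (∫⁻ b, ∫⁻ a, ENNReal.ofReal (f a b) ∂μ ∂ν).toReal := by
        rw [lintegral_lintegral_swap hF.aemeasurable]

theorem etaSup_nonneg {Ω : Type*} (lam : Ω → ℝ → ℝ) (ω : Ω) : 0 ≤ etaSup lam ω :=
  Real.sSup_nonneg fun _ ht => ht.1

theorem intervalIntegral_comp_div_of_eq_mul_ite {γ : ℝ → ℝ} {g c x s : ℝ} (hx : 0 < x)
    (hc : 0 ≤ c) (hs : 0 ≤ s) (hγ : ∀ t, 0 ≤ t → γ t = g * if c ≤ t then 1 else 0) :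
    ∫ r in (0:ℝ)..s, γ (r / x) = g * max (s - x * c) 0 := by
  rw [← intervalIntegral_ite_le_const g (mul_nonneg hx.le hc) hs]
  refine intervalIntegral.integral_congr fun r hr => ?_
  rw [uIcc_of_le hs] at hr
  simp only [hγ _ (div_nonneg hr.1 hx.le), le_div_iff₀ hx, mul_comm c x, mul_ite, mul_one,
    mul_zero]

theorem gamStar_eq_of_eq_mul_ite {Ω : Type*} {gam : Ω → ℝ → ℝ} {ω : Ω} {g c : ℝ} (hg : 0 ≤ g)
    (hc : 0 ≤ c)
    (hgam : ∀ t, 0 ≤ t → gam ω t = g * if c ≤ t then 1 else 0) : gamStar gam ω = g := by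
  refine IsGreatest.csSup_eq ⟨⟨c, hc, by simp [hgam c hc]⟩, ?_⟩
  rintro _ ⟨t, ht, rfl⟩
  rw [hgam t ht]
  split_ifs <;> simp [hg]

section StepSusceptibility

variable {P : Measure Ω} {lam gam : Ω → ℝ → ℝ} {gs zeta : Ω → ℝ}

theorem EinvGamStar_eq_of_eq_mul_ite (hgs_pos : ∀ᵐ ω ∂P, 0 < gs ω)
    (hzeta_nonneg : ∀ᵐ ω ∂P, 0 ≤ zeta ω)
    (hgam : ∀ᵐ ω ∂P, ∀ t, 0 ≤ t → gam ω t = gs ω * if zeta ω ≤ t then 1 else 0) :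
    EinvGamStar P gam = ∫⁻ ω, ENNReal.ofReal (gs ω)⁻¹ ∂P := by
  refine lintegral_congr_ae ?_
  filter_upwards [hgs_pos, hzeta_nonneg, hgam] with ω hg hz hγ
  rw [gamStar_eq_of_eq_mul_ite hg.le hz hγ, ENNReal.ofReal_inv_of_pos hg]

theorem Hfun_eq_of_eq_mul_ite [IsFiniteMeasure P] (hgs_meas : Measurable gs)
    (hzeta_meas : Measurable zeta) (hgs_pos : ∀ᵐ ω ∂P, 0 < gs ω)
    (hzeta_nonneg : ∀ᵐ ω ∂P, 0 ≤ zeta ω) (hzeta_int : Integrable zeta P)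
    (hgam : ∀ᵐ ω ∂P, ∀ t, 0 ≤ t → gam ω t = gs ω * if zeta ω ≤ t then 1 else 0)
    (hE : EinvGamStar P gam ≠ ∞) {x : ℝ} (hx : 0 < x) :
    Hfun P gam x = x * ∫ ω, zeta ω ∂P + (EinvGamStar P gam).toReal := by
  set f : ℝ → Ω → ℝ := fun s ω => Real.exp (-(gs ω * max (s - x * zeta ω) 0))
  have hHfun : Hfun P gam x = ∫ s in Ioi 0, ∫ ω, f s ω ∂P := by
    refine setIntegral_congr_fun measurableSet_Ioi fun s hs => integral_congr_ae ?_
    filter_upwards [hzeta_nonneg, hgam] with ω hz hγ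
    rw [intervalIntegral_comp_div_of_eq_mul_ite hx hz (le_of_lt hs) hγ]
  have hf_meas : Measurable (Function.uncurry f) := by
    unfold f; fun_prop
  have hf_le_one : ∀ s, ∀ᵐ ω ∂P, f s ω ≤ 1 := fun s => by
    filter_upwards [hgs_pos] with ω hg
    exact Real.exp_le_one_iff.2 (neg_nonpos.2 (mul_nonneg hg.le (le_max_right _ _)))
  have hinner : ∀ᵐ ω ∂P, ∫⁻ s in Ioi 0, ENNReal.ofReal (f s ω)
      = ENNReal.ofReal (x * zeta ω) + ENNReal.ofReal (gs ω)⁻¹ := by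
    filter_upwards [hgs_pos, hzeta_nonneg] with ω hg hz
    rw [lintegral_Ioi_exp_neg_mul_max_sub hg (mul_nonneg hx.le hz),
      ENNReal.ofReal_add (mul_nonneg hx.le hz) (inv_nonneg.2 hg.le)]
  have hmean :
      ∫⁻ ω, ENNReal.ofReal (x * zeta ω) ∂P = ENNReal.ofReal (x * ∫ ω, zeta ω ∂P) := by
    rw [← integral_const_mul, ofReal_integral_eq_lintegral_ofReal (hzeta_int.const_mul x)
      (hzeta_nonneg.mono fun _ hz => mul_nonneg hx.le hz)]
  rw [hHfun, integral_integral_eq_toReal_lintegral_lintegral_swap hf_meas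
      (fun _ _ => (Real.exp_pos _).le) hf_le_one, lintegral_congr_ae hinner,
    lintegral_add_left (hzeta_meas.const_mul x).ennreal_ofReal, hmean,
    ← EinvGamStar_eq_of_eq_mul_ite hgs_pos hzeta_nonneg hgam,
    ENNReal.toReal_add ENNReal.ofReal_ne_top hE,
    ENNReal.toReal_ofReal (mul_nonneg hx.le (integral_nonneg_of_ae hzeta_nonneg))]

theorem Rnought_nonpos (hlam : ∀ᵐ ω ∂P, ∀ t, 0 < t → lam ω t ≤ 0) : Rnought P lam ≤ 0 :=
  setIntegral_nonpos measurableSet_Ioi fun t ht =>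
    integral_nonpos_of_ae (hlam.mono fun _ h => h t ht)

theorem integral_pos_of_eq_mul_ite (hR : 0 < Rnought P lam)
    (hsupp : ∀ᵐ ω ∂P, ∀ s t, 0 ≤ s → 0 ≤ t → 0 < lam ω s → 0 < gam ω t → s ≤ t)
    (hgs_pos : ∀ᵐ ω ∂P, 0 < gs ω) (hzeta_nonneg : ∀ᵐ ω ∂P, 0 ≤ zeta ω)
    (hzeta_int : Integrable zeta P)
    (hgam : ∀ᵐ ω ∂P, ∀ t, 0 ≤ t → gam ω t = gs ω * if zeta ω ≤ t then 1 else 0) :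
    0 < ∫ ω, zeta ω ∂P := by
  refine (integral_nonneg_of_ae hzeta_nonneg).lt_of_ne fun hZ => hR.not_ge (Rnought_nonpos ?_)
  have hzeta_zero := (integral_eq_zero_iff_of_nonneg_ae hzeta_nonneg hzeta_int).1 hZ.symm
  filter_upwards [hsupp, hgs_pos, hgam, hzeta_zero] with ω hs hg hγ hz t ht
  have hγ0 : 0 < gam ω 0 := by simpa [hγ 0 le_rfl, hz] using hg
  by_contra! hlam
  exact ht.not_ge (hs t 0 ht.le le_rfl hlam hγ0)

end StepSusceptibility

theorem endemic_equilibrium_indicator_case_general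
    {Ω : Type*} [MeasurableSpace Ω] (P : Measure Ω) [IsProbabilityMeasure P]
    (lamStar : ℝ) (lam0 gam0 lam gam : Ω → ℝ → ℝ)
    (hctx : BaseContext P lamStar lam0 gam0 lam gam)
    (hR0_gt : EinvGamStar P gam < ENNReal.ofReal (Rnought P lam))
    (gs zeta : Ω → ℝ) (hgs_meas : Measurable gs) (hzeta_meas : Measurable zeta)
    (hgs_range : ∀ᵐ ω ∂P, gs ω ∈ Set.Ioc (0:ℝ) 1)
    (hzeta_ge : ∀ᵐ ω ∂P, etaSup lam ω ≤ zeta ω)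
    (hzeta_int : Integrable zeta P)
    (hgam_eq : ∀ᵐ ω ∂P, ∀ t : ℝ, 0 ≤ t →
      gam ω t = gs ω * (if zeta ω ≤ t then 1 else 0))
    (Fstar : ℝ)
    (hFstar : Fstar = (Rnought P lam - (EinvGamStar P gam).toReal) / (∫ ω, zeta ω ∂P)) :
    0 < Fstar ∧
    Hfun P gam Fstar = Rnought P lam ∧
    (∀ y : ℝ, 0 < y → Hfun P gam y = Rnought P lam → y = Fstar) ∧
    (∫ ω, etaSup lam ω ∂P) * Fstar / Rnought P lam
      = ((∫ ω, etaSup lam ω ∂P) / (∫ ω, zeta ω ∂P))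
        * (1 - (EinvGamStar P gam).toReal / Rnought P lam) := by
  obtain ⟨-, -, -, -, -, -, -, hsupp, -⟩ := hctx
  have hzeta_nonneg : ∀ᵐ ω ∂P, 0 ≤ zeta ω :=
    hzeta_ge.mono fun ω h => (etaSup_nonneg lam ω).trans h
  have hgs_pos : ∀ᵐ ω ∂P, 0 < gs ω := hgs_range.mono fun _ h => h.1
  have hE : EinvGamStar P gam ≠ ∞ := hR0_gt.ne_top
  have hER : (EinvGamStar P gam).toReal < Rnought P lam :=
    (ENNReal.lt_ofReal_iff_toReal_lt hE).1 hR0_gt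
  have hR : 0 < Rnought P lam := ENNReal.toReal_nonneg.trans_lt hER
  have hZ : 0 < ∫ ω, zeta ω ∂P :=
    integral_pos_of_eq_mul_ite hR hsupp hgs_pos hzeta_nonneg hzeta_int hgam_eq
  have hH : ∀ x, 0 < x → Hfun P gam x = x * ∫ ω, zeta ω ∂P + (EinvGamStar P gam).toReal :=
    fun x hx => Hfun_eq_of_eq_mul_ite hgs_meas hzeta_meas hgs_pos hzeta_nonneg hzeta_int
      hgam_eq hE hx
  have hF : 0 < Fstar := hFstar ▸ div_pos (sub_pos.2 hER) hZ
  refine ⟨hF, ?_, fun y hy hHy => ?_, ?_⟩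
  · rw [hH _ hF, hFstar, div_mul_cancel₀ _ hZ.ne']
    ring
  · rw [hH y hy] at hHy
    rw [hFstar, eq_div_iff hZ.ne']
    linarith
  · rw [hFstar]
    field_simp

/-- When `γ(t) = γ* 1_{t ≥ ζ}` with `ζ ≥ η`, `𝔼[ζ] < ∞` and `γ* ∈ (0,1]`,
the unique positive solution of `∫₀^∞ 𝔼[exp(−∫₀ˢ γ(r/F̄*) dr)] ds = R₀` is
`F̄* = (R₀ − 𝔼[1/γ*]) / 𝔼[ζ]`, and `Ī* = 𝔼[η] F̄* / R₀ = (𝔼[η]/𝔼[ζ]) (1 − 𝔼[1/γ*]/R₀)`. -/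
theorem endemic_equilibrium_indicator_case
    {Ω : Type*} [MeasurableSpace Ω] (P : Measure Ω) [IsProbabilityMeasure P]
    (lamStar : ℝ) (lam0 gam0 lam gam : Ω → ℝ → ℝ)
    (hctx : BaseContext P lamStar lam0 gam0 lam gam)
    (hAI : AssumptionI P lam0 gam0 lam gam)
    (hAII : AssumptionII P gam)
    (hR0fin : IntegrableOn (lamBar P lam) (Set.Ioi 0))
    (hR0_gt : EinvGamStar P gam < ENNReal.ofReal (Rnought P lam))
    (gs zeta : Ω → ℝ) (hgs_meas : Measurable gs) (hzeta_meas : Measurable zeta)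
    (hgs_range : ∀ᵐ ω ∂P, gs ω ∈ Set.Ioc (0:ℝ) 1)
    (hzeta_ge : ∀ᵐ ω ∂P, etaSup lam ω ≤ zeta ω)
    (hzeta_int : Integrable zeta P)
    (hgam_eq : ∀ᵐ ω ∂P, ∀ t : ℝ, 0 ≤ t →
      gam ω t = gs ω * (if zeta ω ≤ t then 1 else 0))
    (Fstar : ℝ)
    (hFstar : Fstar = (Rnought P lam - (EinvGamStar P gam).toReal) / (∫ ω, zeta ω ∂P)) :
    0 < Fstar ∧
    Hfun P gam Fstar = Rnought P lam ∧
    (∀ y : ℝ, 0 < y → Hfun P gam y = Rnought P lam → y = Fstar) ∧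
    (∫ ω, etaSup lam ω ∂P) * Fstar / Rnought P lam
      = ((∫ ω, etaSup lam ω ∂P) / (∫ ω, zeta ω ∂P))
        * (1 - (EinvGamStar P gam).toReal / Rnought P lam) :=
  endemic_equilibrium_indicator_case_general P lamStar lam0 gam0 lam gam hctx hR0_gt gs zeta
    hgs_meas hzeta_meas hgs_range hzeta_ge hzeta_int hgam_eq Fstar hFstar
end
end

section
/- Any càdlàg solution (S̄, F̄) of the limit epidemic system satisfies, for all t ≥ 0, the conservation identity 𝔼[exp(−∫₀ᵗ γ₀(r) F̄(r) dr)] + ∫₀ᵗ 𝔼[exp(−∫ₛᵗ γ(r−s) F̄(r) dr)]·S̄(s) F̄(s) ds = 1. -/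
open MeasureTheory Filter Set ProbabilityTheory
open scoped ENNReal

noncomputable section

variable {Ω : Type*} [MeasurableSpace Ω]

/-!
Along each path, `u ↦ exp (-∫ₛᵘ γ(r - s) F̄(r) dr)` has right derivative `-γ(u - s) F̄(u)` times
itself, so taking expectations gives `𝔼[exp (-∫ₛᵗ γ(r - s) F̄(r) dr)] = 1 - ∫ₛᵗ F̄(u) E(s, u) du`,
where `E(s, u) = 𝔼[γ(u - s) exp (-∫ₛᵘ γ(r - s) F̄(r) dr)]` is the kernel of the equation
`S̄(u) = E₀(u) + ∫₀ᵘ E(s, u) S̄(s) F̄(s) ds` (and `E₀` is the same expectation built from `γ₀`).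
Substituting, exchanging the order of integration over the triangle `0 ≤ s ≤ u ≤ t` and using
the equation for `S̄`, the left-hand side becomes
`1 - ∫₀ᵗ F̄ E₀ + ∫₀ᵗ S̄ F̄ - ∫₀ᵗ F̄ (S̄ - E₀) = 1`.
-/

open Bornology Topology Real Function

theorem measurable_of_continuousWithinAt_Ici {β : Type*} [TopologicalSpace β]
    [TopologicalSpace.PseudoMetrizableSpace β] [MeasurableSpace β] [BorelSpace β] {f : ℝ → β}
    (hf : ∀ x, ContinuousWithinAt f (Ici x) x) : Measurable f := by
  -- sample `f` on the grid `ℤ / (n + 1)`, at the first grid point to the right of `x`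
  set grid : ℕ → ℝ → ℝ := fun n x => ⌈x * (n + 1)⌉ / (n + 1)
  have grid_mem (n : ℕ) (x : ℝ) : grid n x ∈ Icc x (x + 1 / (n + 1)) := by
    have hn : (0 : ℝ) < n + 1 := by positivity
    have h₁ := Int.le_ceil (x * (n + 1))
    have h₂ := Int.ceil_lt_add_one (x * (n + 1))
    constructor
    · rw [le_div_iff₀ hn]; exact h₁
    · rw [div_le_iff₀ hn, add_mul, one_div_mul_cancel hn.ne']; exact h₂.le
  have grid_tendsto (x : ℝ) : Tendsto (fun n => grid n x) atTop (𝓝[≥] x) := by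
    refine tendsto_nhdsWithin_iff.2 ⟨?_, Eventually.of_forall fun n => (grid_mem n x).1⟩
    refine tendsto_of_tendsto_of_tendsto_of_le_of_le tendsto_const_nhds ?_
      (fun n => (grid_mem n x).1) (fun n => (grid_mem n x).2)
    simpa using tendsto_const_nhds.add (tendsto_one_div_add_atTop_nhds_zero_nat (𝕜 := ℝ))
  refine measurable_of_tendsto_metrizable (f := fun n x => f (grid n x)) (fun n => ?_)
    (tendsto_pi_nhds.2 fun x => (hf x).tendsto.comp (grid_tendsto x))
  exact (measurable_of_countable fun m : ℤ => f (m / (n + 1))).comp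
    (Int.measurable_ceil.comp (measurable_id.mul_const _))

theorem Cadlag.isBounded_image {f : ℝ → ℝ} (hf : Cadlag f) {K : Set ℝ} (hK : IsCompact K)
    (hK₀ : K ⊆ Ici 0) : IsBounded (f '' K) := by
  refine hK.induction_on (p := fun s => IsBounded (f '' s)) (by simp)
    (fun s t hst ht => ht.subset (image_mono hst))
    (fun s t hs ht => by simpa only [image_union] using hs.union ht) fun x hx => ?_
  have hright : f ⁻¹' Metric.ball (f x) 1 ∈ 𝓝[≥] x :=
    (hf.1 x (hK₀ hx)).preimage_mem_nhdsWithin (Metric.ball_mem_nhds _ one_pos)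
  rcases (mem_Ici.1 (hK₀ hx)).eq_or_lt with rfl | hx₀
  · refine ⟨_, nhdsWithin_mono _ hK₀ hright, ?_⟩
    exact Metric.isBounded_ball.subset (image_preimage_subset _ _)
  · obtain ⟨l, hl⟩ := hf.2 x hx₀
    have hleft : f ⁻¹' Metric.ball l 1 ∈ 𝓝[<] x := hl (Metric.ball_mem_nhds _ one_pos)
    refine ⟨f ⁻¹' Metric.ball l 1 ∪ f ⁻¹' Metric.ball (f x) 1, nhdsWithin_le_nhds ?_, ?_⟩
    · rw [← nhdsLT_sup_nhdsGE]
      exact ⟨mem_of_superset hleft subset_union_left, mem_of_superset hright subset_union_right⟩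
    · rw [image_union]
      exact (Metric.isBounded_ball.subset (image_preimage_subset _ _)).union
        (Metric.isBounded_ball.subset (image_preimage_subset _ _))

theorem Cadlag.continuousWithinAt_Ici_comp_projIcc {f : ℝ → ℝ} (hf : Cadlag f) {t : ℝ}
    (ht : 0 ≤ t) (x : ℝ) : ContinuousWithinAt (fun y => f (projIcc 0 t ht y)) (Ici x) x :=
  ContinuousWithinAt.comp (t := Ici (projIcc 0 t ht x : ℝ)) (hf.1 _ (projIcc 0 t ht x).2.1)
    (continuous_subtype_val.comp continuous_projIcc).continuousWithinAt
    fun _ hy => monotone_projIcc ht (mem_Ici.1 hy)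

theorem Cadlag.measurable_comp_projIcc {f : ℝ → ℝ} (hf : Cadlag f) {t : ℝ} (ht : 0 ≤ t) :
    Measurable fun u => f (projIcc 0 t ht u) :=
  measurable_of_continuousWithinAt_Ici (hf.continuousWithinAt_Ici_comp_projIcc ht)

theorem Cadlag.exists_bound_comp_projIcc {f : ℝ → ℝ} (hf : Cadlag f) {t : ℝ} (ht : 0 ≤ t) :
    ∃ C, ∀ u, ‖f (projIcc 0 t ht u)‖ ≤ C := by
  obtain ⟨C, hC⟩ := (hf.isBounded_image isCompact_Icc Icc_subset_Ici_self).exists_norm_le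
  exact ⟨C, fun u => hC _ (mem_image_of_mem f (projIcc 0 t ht u).2)⟩

theorem intervalIntegrable_of_norm_le {f : ℝ → ℝ} {a b C : ℝ} (hf : Measurable f)
    (hC : ∀ x ∈ uIoc a b, ‖f x‖ ≤ C) : IntervalIntegrable f volume a b :=
  intervalIntegrable_const.mono_fun' hf.aestronglyMeasurable
    (ae_restrict_of_forall_mem measurableSet_uIoc hC)

theorem exp_neg_integral_eq_one_sub_integral {f : ℝ → ℝ} {a b : ℝ} (hab : a ≤ b)
    (hf : IntervalIntegrable f volume a b)
    (hrc : ∀ u ∈ Ico a b, ContinuousWithinAt f (Ici u) u) :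
    exp (-∫ r in a..b, f r) = 1 - ∫ u in a..b, f u * exp (-∫ r in a..u, f r) := by
  set Φ : ℝ → ℝ := fun u => exp (-∫ r in a..u, f r)
  have hΦ : ContinuousOn Φ (Icc a b) := by
    have := intervalIntegral.continuousOn_primitive_interval (μ := volume)
      ((intervalIntegrable_iff_integrableOn_Icc_of_le hab).1 hf |>.mono_set
        (uIcc_of_le hab).subset)
    rw [uIcc_of_le hab] at this
    exact this.neg.rexp
  have hderiv (u : ℝ) (hu : u ∈ Ioo a b) : HasDerivWithinAt Φ (-(f u * Φ u)) (Ioi u) u := by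
    have hfu : IntervalIntegrable f volume a u :=
      hf.mono_set (by rw [uIcc_of_le hab, uIcc_of_le hu.1.le]; exact Icc_subset_Icc_right hu.2.le)
    have hmeas : StronglyMeasurableAtFilter f (𝓝[>] u) :=
      ⟨Ioo u b, Ioo_mem_nhdsGT hu.2, (hf.1.mono_set (Ioo_subset_Ioc_self.trans
        (Ioc_subset_Ioc_left hu.1.le))).aestronglyMeasurable⟩
    have := (intervalIntegral.integral_hasDerivWithinAt_right (s := Ici u) hfu hmeas
      ((hrc u ⟨hu.1.le, hu.2⟩).mono Ioi_subset_Ici_self)).neg.exp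
    simpa [Φ, mul_comm] using this.mono Ioi_subset_Ici_self
  have hint : IntervalIntegrable (fun u => -(f u * Φ u)) volume a b :=
    (hf.mul_continuousOn (by rwa [uIcc_of_le hab])).neg
  have := intervalIntegral.integral_eq_sub_of_hasDeriv_right_of_le hab hΦ hderiv hint
  simp only [intervalIntegral.integral_neg, intervalIntegral.integral_same, neg_zero, exp_zero,
    Φ] at this
  linarith

theorem measurable_intervalIntegral_of_measurable_uncurry {β : Type*} [MeasurableSpace β]
    {g : β → ℝ → ℝ} {a b : β → ℝ} (hg : Measurable (uncurry g)) (ha : Measurable a)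
    (hb : Measurable b) : Measurable fun x => ∫ r in a x..b x, g x r := by
  have hIoc {a b : β → ℝ} (ha : Measurable a) (hb : Measurable b) :
      Measurable fun x => ∫ r in Ioc (a x) (b x), g x r := by
    have hs : MeasurableSet {p : β × ℝ | p.2 ∈ Ioc (a p.1) (b p.1)} :=
      (measurableSet_lt (ha.comp measurable_fst) measurable_snd).inter
        (measurableSet_le measurable_snd (hb.comp measurable_fst))
    simp_rw [← integral_indicator measurableSet_Ioc]
    exact ((hg.indicator hs).stronglyMeasurable.integral_prod_right').measurable
  exact (hIoc ha hb).sub (hIoc hb ha)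

theorem intervalIntegral_intervalIntegral_triangle_swap {K : ℝ → ℝ → ℝ} {a b : ℝ}
    (hab : a ≤ b) (hK : IntegrableOn (uncurry K) ({p | p.1 < p.2} ∩ Ioc a b ×ˢ Ioc a b)) :
    ∫ s in a..b, ∫ u in s..b, K s u = ∫ u in a..b, ∫ s in a..u, K s u := by
  set T : ℝ → ℝ → ℝ := fun s u => (Ioi s).indicator (K s) u
  have hT : IntegrableOn (uncurry T) (uIoc a b ×ˢ uIoc a b) := by
    have hlt : MeasurableSet {p : ℝ × ℝ | p.1 < p.2} :=
      measurableSet_lt measurable_fst measurable_snd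
    rw [uIoc_of_le hab]
    exact (integrable_indicator_iff hlt).2 (by rwa [IntegrableOn, Measure.restrict_restrict hlt])
  have hleft : ∀ s ∈ uIcc a b, ∫ u in s..b, K s u = ∫ u in a..b, T s u := by
    intro s hs
    rw [uIcc_of_le hab] at hs
    rw [intervalIntegral.integral_of_le hs.2, intervalIntegral.integral_of_le hab,
      setIntegral_indicator measurableSet_Ioi, Ioc_inter_Ioi, sup_eq_right.2 hs.1]
  have hright : ∀ u ∈ uIcc a b, ∫ s in a..b, T s u = ∫ s in a..u, K s u := by
    intro u hu
    rw [uIcc_of_le hab] at hu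
    have hT_eq (s : ℝ) : T s u = (Iio u).indicator (fun s => K s u) s := by
      simp only [T, indicator_apply, mem_Ioi, mem_Iio]
    have hIoo : Ioc a b ∩ Iio u = Ioo a u := by
      ext s
      simp only [mem_inter_iff, mem_Ioc, mem_Iio, mem_Ioo]
      exact ⟨fun h => ⟨h.1.1, h.2⟩, fun h => ⟨⟨h.1, h.2.le.trans hu.2⟩, h.2⟩⟩
    simp_rw [hT_eq]
    rw [intervalIntegral.integral_of_le hu.1, intervalIntegral.integral_of_le hab,
      setIntegral_indicator measurableSet_Iio, hIoo, integral_Ioc_eq_integral_Ioo]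
  rw [intervalIntegral.integral_congr hleft, intervalIntegral_intervalIntegral_swap hT,
    intervalIntegral.integral_congr hright]

structure IsSusceptibility (P : Measure Ω) (g : Ω → ℝ → ℝ) : Prop where
  measurable : Measurable (uncurry g)
  ae_mem_Icc : ∀ᵐ ω ∂P, ∀ u, 0 ≤ u → g ω u ∈ Icc 0 1
  ae_continuousWithinAt : ∀ᵐ ω ∂P, ∀ u, 0 ≤ u → ContinuousWithinAt (g ω) (Ici u) u

structure IsInfectionForce (F : ℝ → ℝ) : Prop where
  measurable : Measurable F
  nonneg : ∀ u, 0 ≤ F u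
  bounded : ∃ C, ∀ u, ‖F u‖ ≤ C
  continuousWithinAt : ∀ u, ContinuousWithinAt F (Ici u) u

theorem Cadlag.isInfectionForce_comp_projIcc {f : ℝ → ℝ} (hf : Cadlag f)
    (hf₀ : ∀ u, 0 ≤ u → 0 ≤ f u) {t : ℝ} (ht : 0 ≤ t) :
    IsInfectionForce fun u => f (projIcc 0 t ht u) where
  measurable := hf.measurable_comp_projIcc ht
  nonneg u := hf₀ _ (projIcc 0 t ht u).2.1
  bounded := hf.exists_bound_comp_projIcc ht
  continuousWithinAt := hf.continuousWithinAt_Ici_comp_projIcc ht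

def cumHazard {α : Type*} (g : α → ℝ → ℝ) (F : ℝ → ℝ) (ω : α) (s t : ℝ) : ℝ :=
  ∫ r in s..t, g ω (r - s) * F r

theorem cumHazard_congr {α : Type*} {g : α → ℝ → ℝ} {F F' : ℝ → ℝ} {s t : ℝ}
    (h : EqOn F F' (uIcc s t)) (ω : α) :
    cumHazard g F ω s t = cumHazard g F' ω s t :=
  intervalIntegral.integral_congr fun r hr => congrArg (g ω (r - s) * ·) (h hr)

theorem norm_mul_exp_neg_cumHazard_le_one {α : Type*} {g : α → ℝ → ℝ} {F : ℝ → ℝ} {ω : α}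
    (hω : ∀ u, 0 ≤ u → g ω u ∈ Icc 0 1) (hF : ∀ u, 0 ≤ F u) {s u : ℝ} (hsu : s ≤ u) :
    ‖g ω (u - s) * exp (-cumHazard g F ω s u)‖ ≤ 1 := by
  have hγ := hω (u - s) (sub_nonneg.2 hsu)
  have hexp : exp (-cumHazard g F ω s u) ≤ 1 :=
    exp_le_one_iff.2 <| neg_nonpos.2 <| intervalIntegral.integral_nonneg hsu fun r hr =>
      mul_nonneg (hω _ (sub_nonneg.2 hr.1)).1 (hF r)
  rw [norm_mul, Real.norm_of_nonneg hγ.1, Real.norm_of_nonneg (exp_pos _).le]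
  exact mul_le_one₀ hγ.2 (exp_pos _).le hexp

def escapeProb (P : Measure Ω) (g : Ω → ℝ → ℝ) (F : ℝ → ℝ) (s t : ℝ) : ℝ :=
  ∫ ω, exp (-cumHazard g F ω s t) ∂P

def meanSusceptibility (P : Measure Ω) (g : Ω → ℝ → ℝ) (F : ℝ → ℝ) (s t : ℝ) : ℝ :=
  ∫ ω, g ω (t - s) * exp (-cumHazard g F ω s t) ∂P

section Susceptibility

variable {P : Measure Ω} {g : Ω → ℝ → ℝ} {F : ℝ → ℝ}

theorem escapeProb_congr {F' : ℝ → ℝ} {s t : ℝ} (h : EqOn F F' (uIcc s t)) :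
    escapeProb P g F s t = escapeProb P g F' s t := by
  simp only [escapeProb, cumHazard_congr h]

theorem meanSusceptibility_congr {F' : ℝ → ℝ} {s t : ℝ} (h : EqOn F F' (uIcc s t)) :
    meanSusceptibility P g F s t = meanSusceptibility P g F' s t := by
  simp only [meanSusceptibility, cumHazard_congr h]

theorem measurable_cumHazard (hg : Measurable (uncurry g)) (hF : Measurable F) :
    Measurable fun q : Ω × ℝ × ℝ => cumHazard g F q.1 q.2.1 q.2.2 :=
  measurable_intervalIntegral_of_measurable_uncurry
    ((hg.comp ((measurable_fst.comp measurable_fst).prodMk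
      (measurable_snd.sub (measurable_fst.comp (measurable_snd.comp measurable_fst))))).mul
      (hF.comp measurable_snd))
    (measurable_fst.comp measurable_snd) (measurable_snd.comp measurable_snd)

theorem measurable_meanSusceptibility [SFinite P] (hg : Measurable (uncurry g))
    (hF : Measurable F) : Measurable (uncurry (meanSusceptibility P g F)) := by
  have : Measurable fun q : (ℝ × ℝ) × Ω =>
      g q.2 (q.1.2 - q.1.1) * exp (-cumHazard g F q.2 q.1.1 q.1.2) :=
    (hg.comp (measurable_snd.prodMk (measurable_snd.comp measurable_fst |>.sub
      (measurable_fst.comp measurable_fst)))).mul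
      ((measurable_cumHazard hg hF).comp (measurable_snd.prodMk measurable_fst)).neg.exp
  exact this.stronglyMeasurable.integral_prod_right'.measurable

theorem norm_meanSusceptibility_le_one [IsProbabilityMeasure P]
    (hg : ∀ᵐ ω ∂P, ∀ u, 0 ≤ u → g ω u ∈ Icc 0 1) (hF : ∀ u, 0 ≤ F u) {s u : ℝ} (hsu : s ≤ u) :
    ‖meanSusceptibility P g F s u‖ ≤ 1 := by
  simpa [meanSusceptibility] using norm_integral_le_of_norm_le_const (hg.mono fun ω hω =>
    norm_mul_exp_neg_cumHazard_le_one hω hF hsu)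

theorem ae_exp_neg_cumHazard_eq (hg : IsSusceptibility P g) (hF : IsInfectionForce F)
    {s t : ℝ} (hst : s ≤ t) :
    ∀ᵐ ω ∂P, exp (-cumHazard g F ω s t)
      = 1 - ∫ u in s..t, g ω (u - s) * F u * exp (-cumHazard g F ω s u) := by
  obtain ⟨C, hC⟩ := hF.bounded
  filter_upwards [hg.ae_mem_Icc, hg.ae_continuousWithinAt] with ω hω hωc
  refine exp_neg_integral_eq_one_sub_integral hst ?_ fun u hu => ?_
  · refine intervalIntegrable_of_norm_le ((hg.measurable.of_uncurry_left.comp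
      (measurable_id.sub_const s)).mul hF.measurable) (C := C) fun r hr => ?_
    have hγ := hω (r - s) (sub_nonneg.2 (uIoc_of_le hst ▸ hr).1.le)
    rw [norm_mul, Real.norm_of_nonneg hγ.1]
    exact (mul_le_of_le_one_left (norm_nonneg _) hγ.2).trans (hC r)
  · exact (ContinuousWithinAt.comp (f := fun r => r - s) (t := Ici (u - s))
      (hωc _ (sub_nonneg.2 hu.1)) (continuous_sub_right s).continuousWithinAt
      fun r hr => sub_le_sub_right (mem_Ici.1 hr) s).mul (hF.continuousWithinAt u)

theorem integrable_hazardKernel [IsFiniteMeasure P] (hg : IsSusceptibility P g)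
    (hF : IsInfectionForce F) {s t : ℝ} (hst : s ≤ t) :
    Integrable (uncurry fun u ω => g ω (u - s) * F u * exp (-cumHazard g F ω s u))
      ((volume.restrict (uIoc s t)).prod P) := by
  obtain ⟨C, hC⟩ := hF.bounded
  have : IsFiniteMeasure (volume.restrict (uIoc s t)) := by
    rw [uIoc_of_le hst]; infer_instance
  refine Integrable.of_bound ?_ C ?_
  · exact (((hg.measurable.comp (measurable_snd.prodMk (measurable_fst.sub_const s))).mul
      (hF.measurable.comp measurable_fst)).mul ((measurable_cumHazard hg.measurable
        hF.measurable).comp (measurable_snd.prodMk (measurable_const.prodMk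
          measurable_fst))).neg.exp).aestronglyMeasurable
  · filter_upwards [Measure.quasiMeasurePreserving_fst.ae
        (ae_restrict_mem (μ := volume) measurableSet_uIoc),
      Measure.quasiMeasurePreserving_snd.ae hg.ae_mem_Icc] with p hp hω
    calc _ = ‖F p.1 * (g p.2 (p.1 - s) * exp (-cumHazard g F p.2 s p.1))‖ := by
          rw [uncurry_def, mul_left_comm, ← mul_assoc]
      _ ≤ C * 1 := norm_mul_le_of_le (hC _)
          (norm_mul_exp_neg_cumHazard_le_one hω hF.nonneg (uIoc_of_le hst ▸ hp).1.le)
      _ = C := mul_one C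

theorem escapeProb_eq_one_sub_integral [IsProbabilityMeasure P] (hg : IsSusceptibility P g)
    (hF : IsInfectionForce F) {s t : ℝ} (hst : s ≤ t) :
    escapeProb P g F s t = 1 - ∫ u in s..t, F u * meanSusceptibility P g F s u := by
  have hk := integrable_hazardKernel hg hF hst
  have hk_int : Integrable (fun ω => ∫ u in s..t,
      g ω (u - s) * F u * exp (-cumHazard g F ω s u)) P := by
    simpa only [intervalIntegral.integral_of_le hst, uIoc_of_le hst, uncurry_apply_pair] using
      hk.integral_prod_right
  rw [escapeProb, integral_congr_ae (ae_exp_neg_cumHazard_eq hg hF hst),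
    integral_sub (integrable_const 1) hk_int, ← intervalIntegral_integral_swap hk]
  simp only [integral_const, probReal_univ, smul_eq_mul, one_mul]
  congr 1
  refine intervalIntegral.integral_congr fun u _ => ?_
  simp only [meanSusceptibility, ← integral_const_mul]
  exact integral_congr_ae (ae_of_all _ fun ω => by ring)

theorem integral_escapeProb_mul_eq [IsProbabilityMeasure P] (hg : IsSusceptibility P g)
    (hF : IsInfectionForce F) {φ : ℝ → ℝ} (hφ : Measurable φ) (hφb : ∃ C, ∀ s, ‖φ s‖ ≤ C)
    {a t : ℝ} (hat : a ≤ t) :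
    ∫ s in a..t, escapeProb P g F s t * φ s
      = (∫ s in a..t, φ s)
        - ∫ u in a..t, F u * ∫ s in a..u, meanSusceptibility P g F s u * φ s := by
  obtain ⟨CF, hCF⟩ := hF.bounded
  obtain ⟨Cφ, hCφ⟩ := hφb
  let E : ℝ → ℝ → ℝ := meanSusceptibility P g F
  have hE : Measurable (uncurry E) := measurable_meanSusceptibility hg.measurable hF.measurable
  have hFE_bound {s u : ℝ} (hsu : s ≤ u) : ‖F u * E s u‖ ≤ CF * 1 :=
    norm_mul_le_of_le (hCF u) (norm_meanSusceptibility_le_one hg.ae_mem_Icc hF.nonneg hsu)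
  have hinner_int : IntervalIntegrable
      (fun s => (∫ u in s..t, F u * E s u) * φ s) volume a t := by
    refine intervalIntegrable_of_norm_le ((measurable_intervalIntegral_of_measurable_uncurry
      ((hF.measurable.comp measurable_snd).mul hE) measurable_id measurable_const).mul hφ)
      (C := CF * 1 * (t - a) * Cφ) fun s hs => norm_mul_le_of_le ?_ (hCφ s)
    rw [uIoc_of_le hat] at hs
    refine (intervalIntegral.norm_integral_le_of_norm_le_const fun u hu =>
      hFE_bound (uIoc_of_le hs.2 ▸ hu).1.le).trans ?_
    rw [abs_of_nonneg (sub_nonneg.2 hs.2)]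
    exact mul_le_mul_of_nonneg_left (by linarith [hs.1])
      (by linarith [(norm_nonneg _).trans (hCF 0)])
  have htri_int : IntegrableOn (uncurry fun s u => F u * E s u * φ s)
      ({p | p.1 < p.2} ∩ Ioc a t ×ˢ Ioc a t) := by
    refine IntegrableOn.of_bound (measure_lt_top_of_subset (inter_subset_right.trans
      (Set.prod_mono Ioc_subset_Icc_self Ioc_subset_Icc_self))
      (isCompact_Icc.prod isCompact_Icc).measure_lt_top.ne)
      (((hF.measurable.comp measurable_snd).mul hE).mul
        (hφ.comp measurable_fst)).aestronglyMeasurable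
      (CF * 1 * Cφ) (ae_restrict_of_forall_mem ((measurableSet_lt measurable_fst
        measurable_snd).inter (measurableSet_Ioc.prod measurableSet_Ioc)) fun p hp => ?_)
    exact norm_mul_le_of_le (hFE_bound hp.1.le) (hCφ p.1)
  have hescape : ∀ s ∈ uIcc a t,
      escapeProb P g F s t * φ s = φ s - (∫ u in s..t, F u * E s u) * φ s := fun s hs => by
    rw [escapeProb_eq_one_sub_integral hg hF (uIcc_of_le hat ▸ hs).2]; ring
  rw [intervalIntegral.integral_congr hescape, intervalIntegral.integral_sub
    (intervalIntegrable_of_norm_le hφ fun s _ => hCφ s) hinner_int]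
  simp_rw [← intervalIntegral.integral_mul_const,
    intervalIntegral_intervalIntegral_triangle_swap hat htri_int, mul_assoc,
    intervalIntegral.integral_const_mul]
  rfl

theorem escapeProb_add_integral_eq_one [IsProbabilityMeasure P] {g₀ : Ω → ℝ → ℝ} {S : ℝ → ℝ}
    {t : ℝ} (ht : 0 ≤ t) (hg₀ : IsSusceptibility P g₀) (hg : IsSusceptibility P g)
    (hF : IsInfectionForce F) (hSm : Measurable S) (hSb : ∃ C, ∀ u, ‖S u‖ ≤ C)
    (hS : ∀ u ∈ Icc 0 t, S u = meanSusceptibility P g₀ F 0 u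
      + ∫ s in 0..u, meanSusceptibility P g F s u * (S s * F s)) :
    escapeProb P g₀ F 0 t + ∫ s in 0..t, escapeProb P g F s t * (S s * F s) = 1 := by
  obtain ⟨CF, hCF⟩ := hF.bounded
  obtain ⟨CS, hCS⟩ := hSb
  have hSF : Measurable fun s => S s * F s := hSm.mul hF.measurable
  have hSF_bound (s : ℝ) : ‖S s * F s‖ ≤ CS * CF := norm_mul_le_of_le (hCS s) (hCF s)
  have hFB_int : IntervalIntegrable (fun u => F u * meanSusceptibility P g₀ F 0 u) volume 0 t :=
    intervalIntegrable_of_norm_le (hF.measurable.mul ((measurable_meanSusceptibility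
      hg₀.measurable hF.measurable).comp measurable_prodMk_left)) fun u hu =>
      norm_mul_le_of_le (hCF u) (norm_meanSusceptibility_le_one hg₀.ae_mem_Icc hF.nonneg
        (uIoc_of_le ht ▸ hu).1.le)
  have hrenewal : ∫ u in 0..t, F u * ∫ s in 0..u, meanSusceptibility P g F s u * (S s * F s)
      = ∫ u in 0..t, (S u * F u - F u * meanSusceptibility P g₀ F 0 u) :=
    intervalIntegral.integral_congr fun u hu => by rw [hS u (uIcc_of_le ht ▸ hu)]; ring
  rw [escapeProb_eq_one_sub_integral hg₀ hF ht, integral_escapeProb_mul_eq hg hF hSF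
    ⟨_, hSF_bound⟩ ht, hrenewal, intervalIntegral.integral_sub
    (intervalIntegrable_of_norm_le hSF fun s _ => hSF_bound s) hFB_int]
  ring

theorem escapeProb_add_integral_eq_one_of_cadlag [IsProbabilityMeasure P] {g₀ : Ω → ℝ → ℝ}
    {S : ℝ → ℝ} {t : ℝ} (ht : 0 ≤ t) (hg₀ : IsSusceptibility P g₀) (hg : IsSusceptibility P g)
    (hF : Cadlag F) (hS : Cadlag S) (hF₀ : ∀ u, 0 ≤ u → 0 ≤ F u)
    (hSeq : ∀ u, 0 ≤ u → S u = meanSusceptibility P g₀ F 0 u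
      + ∫ s in 0..u, meanSusceptibility P g F s u * (S s * F s)) :
    escapeProb P g₀ F 0 t + ∫ s in 0..t, escapeProb P g F s t * (S s * F s) = 1 := by
  -- freeze `F` and `S` outside `[0, t]`: this makes them globally measurable and bounded
  set Fc : ℝ → ℝ := fun u => F (projIcc 0 t ht u)
  set Sc : ℝ → ℝ := fun u => S (projIcc 0 t ht u)
  have hFc : EqOn F Fc (Icc 0 t) := fun u hu => by simp only [Fc, projIcc_of_mem ht hu]
  have hSc : EqOn S Sc (Icc 0 t) := fun u hu => by simp only [Sc, projIcc_of_mem ht hu]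
  have hsub {s u : ℝ} (hs : 0 ≤ s) (hsu : s ≤ u) (hu : u ≤ t) : uIcc s u ⊆ Icc 0 t :=
    uIcc_subset_Icc ⟨hs, hsu.trans hu⟩ ⟨hs.trans hsu, hu⟩
  have hSc_eq (u : ℝ) (hu : u ∈ Icc 0 t) : Sc u = meanSusceptibility P g₀ Fc 0 u
      + ∫ s in 0..u, meanSusceptibility P g Fc s u * (Sc s * Fc s) := by
    rw [← hSc hu, hSeq u hu.1, meanSusceptibility_congr (hFc.mono (hsub le_rfl hu.1 hu.2))]
    congr 1
    refine intervalIntegral.integral_congr fun s hs => ?_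
    rw [uIcc_of_le hu.1] at hs
    have hst : s ∈ Icc 0 t := ⟨hs.1, hs.2.trans hu.2⟩
    rw [meanSusceptibility_congr (hFc.mono (hsub hs.1 hs.2 hu.2)), hSc hst, hFc hst]
  have hintegral : ∫ s in 0..t, escapeProb P g F s t * (S s * F s)
      = ∫ s in 0..t, escapeProb P g Fc s t * (Sc s * Fc s) := by
    refine intervalIntegral.integral_congr fun s hs => ?_
    rw [uIcc_of_le ht] at hs
    rw [escapeProb_congr (hFc.mono (hsub hs.1 hs.2 le_rfl)), hSc hs, hFc hs]
  rw [escapeProb_congr (hFc.mono (hsub le_rfl ht le_rfl)), hintegral]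
  exact escapeProb_add_integral_eq_one ht hg₀ hg (hF.isInfectionForce_comp_projIcc hF₀ ht)
    (hS.measurable_comp_projIcc ht) (hS.exists_bound_comp_projIcc ht) hSc_eq

end Susceptibility

/-- Any càdlàg solution of the limit epidemic system satisfies the
conservation identity
`𝔼[exp(−∫₀ᵗ γ₀(r) F̄(r) dr)] + ∫₀ᵗ 𝔼[exp(−∫ₛᵗ γ(r−s) F̄(r) dr)] S̄(s) F̄(s) ds = 1`. -/
theorem conservation_identity
    {Ω : Type*} [MeasurableSpace Ω] (P : Measure Ω) [IsProbabilityMeasure P]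
    (lamStar : ℝ) (lam0 gam0 lam gam : Ω → ℝ → ℝ)
    (hctx : BaseContext P lamStar lam0 gam0 lam gam)
    (S F : ℝ → ℝ)
    (hsol : IsLimitSolution P lam0 gam0 lam gam S F) :
    ∀ t : ℝ, 0 ≤ t →
      (∫ ω, Real.exp (- ∫ r in (0:ℝ)..t, gam0 ω r * F r) ∂P)
        + (∫ s in (0:ℝ)..t,
            (∫ ω, Real.exp (- ∫ r in s..t, gam ω (r - s) * F r) ∂P) * (S s * F s)) = 1 := by
  intro t ht
  obtain ⟨-, -, hgam0, -, hgam, hcadlag, hrange, -, -⟩ := hctx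
  obtain ⟨hS, hF, hnonneg, hSeq, -⟩ := hsol
  have hg₀ : IsSusceptibility P gam0 :=
    ⟨hgam0, hrange.mono fun _ h u hu => (h u hu).2.2.1, hcadlag.mono fun _ h => h.2.1.1⟩
  have hg : IsSusceptibility P gam :=
    ⟨hgam, hrange.mono fun _ h u hu => (h u hu).2.2.2, hcadlag.mono fun _ h => h.2.2.2.1⟩
  simpa only [escapeProb, cumHazard, sub_zero] using
    escapeProb_add_integral_eq_one_of_cadlag ht hg₀ hg hF hS (fun u hu => (hnonneg u hu).2)
      fun u hu => by simpa only [meanSusceptibility, cumHazard, sub_zero] using hSeq u hu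

end
end

section
/- Let (S̄, F̄) be a càdlàg solution of the limit epidemic system. Define Ū(t) := 𝔼[1{t ≥ η₀}·exp(−∫₀ᵗ γ₀(r) F̄(r) dr)] + ∫₀ᵗ 𝔼[1{t−s ≥ η}·exp(−∫ₛᵗ γ(r−s) F̄(r) dr)]·S̄(s) F̄(s) ds and Ī(t) := Ī(0)·F₀ᶜ(t) + ∫₀ᵗ Fᶜ(t−s)·S̄(s) F̄(s) ds, where F₀ᶜ(t) := ℙ(η₀ > t | η₀ > 0) and Fᶜ(t) := ℙ(η > t). Then Ū(t) + Ī(t) = 1 for all t ≥ 0. -/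
open MeasureTheory Filter Set ProbabilityTheory
open scoped ENNReal

noncomputable section

variable {Ω : Type*} [MeasurableSpace Ω]

/-!
Fix `t ≥ 0` and let `e_s(t) = exp (-∫ₛᵗ γ(r - s) F̄(r) dr)` be the probability that an individual
infected at time `s` escapes reinfection until `t` (and `e₀(t)` the same with `γ₀` from time `0`).
While `t - s < η`, the support condition forces `γ(· - s) = 0` on `[s, t]`, so `e_s(t) = 1`: the
term `Fᶜ(t - s)` of `Ī(t)` is exactly what the indicator `1{t - s ≥ η}` removes from `Ū(t)`, and
`Ū(t) + Ī(t) = 𝔼 e₀(t) + ∫₀ᵗ 𝔼 e_s(t) S̄(s) F̄(s) ds`. Differentiating the exponential gives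
`𝔼 e_s(t) = 1 - ∫ₛᵗ F̄(u) 𝔼[γ(u - s) e_s(u)] du`; after exchanging the order of integration over
`0 ≤ s ≤ u ≤ t`, the equation for `S̄` makes everything but `1` cancel.
-/

open Topology

variable {P : Measure Ω}

section Cadlag

lemma exists_rat_ge_pos_of_continuousWithinAt {f : ℝ → ℝ} {s : ℝ}
    (hf : ContinuousWithinAt f (Ici s) s) (hs : 0 < f s) : ∃ q : ℚ, s ≤ q ∧ 0 < f q := by
  obtain ⟨u, hsu, hu⟩ := mem_nhdsGE_iff_exists_Ico_subset.1 (hf.eventually (lt_mem_nhds hs))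
  obtain ⟨q, hsq, hqu⟩ := exists_rat_btwn (mem_Ioi.1 hsu)
  exact ⟨q, hsq.le, hu ⟨hsq.le, hqu⟩⟩

lemma measurable_comp_max_of_continuousWithinAt {β : Type*} [TopologicalSpace β]
    [TopologicalSpace.PseudoMetrizableSpace β] [MeasurableSpace β] [BorelSpace β] {f : ℝ → β}
    (hf : ∀ x, 0 ≤ x → ContinuousWithinAt f (Ici x) x) : Measurable fun x => f (max x 0) := by
  refine measurable_of_tendsto_metrizable (g := fun x : ℝ => f (max x 0))
    (f := fun (n : ℕ) (x : ℝ) => f (⌈max x 0 * n⌉₊ / n))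
    (fun n => (measurable_from_nat (f := fun k : ℕ => f (k / n))).comp
      ((measurable_id.max measurable_const).mul_const _).nat_ceil)
    (tendsto_pi_nhds.2 fun x => ?_)
  have hx : 0 ≤ max x 0 := le_max_right _ _
  -- the grid points `⌈n y⌉ / n` approach `y = max x 0` from the right
  refine (hf _ hx).tendsto.comp (tendsto_nhdsWithin_iff.2 ⟨?_, ?_⟩)
  · exact (tendsto_nat_ceil_mul_div_atTop hx).comp tendsto_natCast_atTop_atTop
  · filter_upwards [eventually_gt_atTop (0 : ℕ)] with n hn
    exact (le_div_iff₀ (Nat.cast_pos.2 hn : (0 : ℝ) < n)).2 (Nat.le_ceil _)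

lemma Cadlag.comp_max {f : ℝ → ℝ} (hf : Cadlag f) : Cadlag fun x => f (max x 0) := by
  have heq : ∀ x, 0 ≤ x → f (max x 0) = f x := fun x hx => by rw [max_eq_left hx]
  refine ⟨fun t ht => (hf.1 t ht).congr (fun y hy => heq y (ht.trans hy)) (heq t ht),
    fun t ht => ?_⟩
  obtain ⟨l, hl⟩ := hf.2 t ht
  exact ⟨l, hl.congr' (eventually_nhdsWithin_of_eventually_nhds (lt_mem_nhds ht) |>.mono
    fun x hx => (heq x hx.le).symm)⟩

lemma Cadlag.exists_measurable_eqOn {f : ℝ → ℝ} (hf : Cadlag f) :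
    ∃ g, Measurable g ∧ Cadlag g ∧ EqOn f g (Ici 0) :=
  ⟨_, measurable_comp_max_of_continuousWithinAt hf.1, hf.comp_max,
    fun x hx => by simp only [max_eq_left (mem_Ici.1 hx)]⟩

lemma Cadlag.mul {f g : ℝ → ℝ} (hf : Cadlag f) (hg : Cadlag g) : Cadlag fun x => f x * g x :=
  ⟨fun t ht => (hf.1 t ht).mul (hg.1 t ht), fun t ht =>
    let ⟨l, hl⟩ := hf.2 t ht
    let ⟨m, hm⟩ := hg.2 t ht
    ⟨l * m, hl.mul hm⟩⟩

lemma Cadlag.exists_bound {f : ℝ → ℝ} (hf : Cadlag f) (t : ℝ) :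
    ∃ C, ∀ x ∈ Icc 0 t, |f x| ≤ C := by
  refine isCompact_Icc.induction_on (p := fun s => ∃ C, ∀ x ∈ s, |f x| ≤ C) ⟨0, by simp⟩
    (fun s u hsu ⟨C, hC⟩ => ⟨C, fun x hx => hC x (hsu hx)⟩)
    (fun s u ⟨C, hC⟩ ⟨D, hD⟩ => ⟨max C D, fun x hx => hx.elim
      (fun h => (hC x h).trans (le_max_left _ _)) (fun h => (hD x h).trans (le_max_right _ _))⟩)
    fun x hx => ?_
  -- right-continuity bounds `f` to the right of `x`, the left limit to the left of `x`
  have hright : ∀ᶠ y in 𝓝[≥] x, |f y| ≤ |f x| + 1 :=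
    (hf.1 x hx.1).abs.eventually (ge_mem_nhds (lt_add_one _))
  rcases hx.1.eq_or_lt with rfl | hpos
  · exact ⟨_, nhdsWithin_mono _ Icc_subset_Ici_self hright, _, fun y hy => hy⟩
  obtain ⟨l, hl⟩ := hf.2 x hpos
  have hleft : ∀ᶠ y in 𝓝[<] x, |f y| ≤ |l| + 1 := hl.abs.eventually (ge_mem_nhds (lt_add_one _))
  have hnhds : ∀ᶠ y in 𝓝 x, |f y| ≤ max (|l| + 1) (|f x| + 1) := by
    rw [← nhdsLT_sup_nhdsGE, eventually_sup]
    exact ⟨hleft.mono fun y hy => hy.trans (le_max_left _ _),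
      hright.mono fun y hy => hy.trans (le_max_right _ _)⟩
  exact ⟨_, mem_nhdsWithin_of_mem_nhds hnhds, _, fun y hy => hy⟩

end Cadlag

section Integrals

lemma Measurable.intervalIntegrable_of_abs_le {f : ℝ → ℝ} (hf : Measurable f) {a b C : ℝ}
    (hab : a ≤ b) (hC : ∀ x ∈ Icc a b, |f x| ≤ C) : IntervalIntegrable f volume a b :=
  (intervalIntegrable_iff_integrableOn_Icc_of_le hab).2 <|
    IntegrableOn.of_bound measure_Icc_lt_top hf.aestronglyMeasurable C <|
      (ae_restrict_iff' measurableSet_Icc).2 (ae_of_all _ hC)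

lemma IntervalIntegrable.bdd_mul {Y W : ℝ → ℝ} {a b C : ℝ}
    (hW : IntervalIntegrable W volume a b) (hY : Measurable Y) (hab : a ≤ b)
    (hC : ∀ x ∈ Icc a b, |Y x| ≤ C) : IntervalIntegrable (fun x => Y x * W x) volume a b := by
  rw [intervalIntegrable_iff_integrableOn_Icc_of_le hab] at hW ⊢
  exact hW.bdd_mul hY.aestronglyMeasurable ((ae_restrict_iff' measurableSet_Icc).2 (ae_of_all _ hC))

lemma measurable_intervalIntegral_param {α : Type*} [MeasurableSpace α] {k : α → ℝ → ℝ}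
    (hk : Measurable (Function.uncurry k)) {a b : α → ℝ} (ha : Measurable a) (hb : Measurable b) :
    Measurable fun p => ∫ r in a p..b p, k p r := by
  have hIoc : ∀ {c d : α → ℝ}, Measurable c → Measurable d →
      Measurable fun p => ∫ r in Ioc (c p) (d p), k p r := fun {c d} hc hd => by
    have hind : Measurable fun q : α × ℝ => (Ioc (c q.1) (d q.1)).indicator (k q.1) q.2 := by
      simp only [indicator_apply, mem_Ioc]
      exact hk.ite ((measurableSet_lt (hc.comp measurable_fst) measurable_snd).inter
        (measurableSet_le measurable_snd (hd.comp measurable_fst))) measurable_const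
    simp_rw [← integral_indicator measurableSet_Ioc]
    exact (hind.stronglyMeasurable.integral_prod_right' (ν := volume)).measurable
  exact (hIoc ha hb).sub (hIoc hb ha)

lemma integral_mul_exp_neg_integral {h : ℝ → ℝ} {a b : ℝ} (hab : a ≤ b) (hm : Measurable h)
    (hint : IntervalIntegrable h volume a b)
    (hrc : ∀ u ∈ Ico a b, ContinuousWithinAt h (Ici u) u) :
    ∫ u in a..b, h u * Real.exp (-∫ r in a..u, h r) = 1 - Real.exp (-∫ r in a..b, h r) := by
  set A : ℝ → ℝ := fun u => ∫ r in a..u, h r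
  have hA : ContinuousOn A (Icc a b) := by
    simpa only [uIcc_of_le hab] using
      intervalIntegral.continuousOn_primitive_interval' hint left_mem_uIcc
  have hderiv : ∀ x ∈ Ioo a b, HasDerivWithinAt (fun u => Real.exp (-A u))
      (-(h x * Real.exp (-A x))) (Ioi x) x := by
    intro x hx
    have hAx : HasDerivWithinAt A (h x) (Ici x) x :=
      intervalIntegral.integral_hasDerivWithinAt_right (hint.mono_set (by
        rw [uIcc_of_le hab, uIcc_of_le hx.1.le]; exact Icc_subset_Icc_right hx.2.le))
        hm.stronglyMeasurable.stronglyMeasurableAtFilter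
        ((hrc x ⟨hx.1.le, hx.2⟩).mono Ioi_subset_Ici_self)
    have key := ((Real.hasDerivAt_exp _).comp_hasDerivWithinAt x hAx.neg).mono Ioi_subset_Ici_self
    rwa [mul_neg, mul_comm] at key
  have hexpA : ContinuousOn (fun u => Real.exp (-A u)) (Icc a b) :=
    (Real.continuous_exp.comp continuous_neg).comp_continuousOn hA
  have hftc := intervalIntegral.integral_eq_sub_of_hasDeriv_right_of_le hab hexpA hderiv
    (hint.mul_continuousOn (by rwa [uIcc_of_le hab])).neg
  simp only [intervalIntegral.integral_neg, A, intervalIntegral.integral_same, neg_zero,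
    Real.exp_zero] at hftc
  linarith

lemma integral_integral_swap_triangle {φ : ℝ → ℝ → ℝ} {a b C : ℝ} (hab : a ≤ b)
    (hφ : Measurable (Function.uncurry φ))
    (hC : ∀ u ∈ Icc a b, ∀ s ∈ Icc a b, s ≤ u → |φ u s| ≤ C) :
    ∫ s in a..b, ∫ u in s..b, φ u s = ∫ u in a..b, ∫ s in a..u, φ u s := by
  set ν := volume.restrict (Ioc a b)
  set ψ : ℝ → ℝ → ℝ := fun s u => (Ioi s).indicator (fun u => φ u s) u
  have hψ : ∀ s u, ψ s u = if s < u then φ u s else 0 := fun s u => by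
    simp only [ψ, indicator_apply, mem_Ioi]
  have hψ' : Function.uncurry ψ = fun p => if p.1 < p.2 then φ p.2 p.1 else 0 :=
    funext fun p => hψ p.1 p.2
  have hint : Integrable (Function.uncurry ψ) (ν.prod ν) := by
    rw [hψ']
    refine Integrable.of_bound (C := C) (Measurable.aestronglyMeasurable ?_) ?_
    · exact (hφ.comp measurable_swap).ite (measurableSet_lt measurable_fst measurable_snd)
        measurable_const
    rw [Measure.prod_restrict]
    refine (ae_restrict_iff' (measurableSet_Ioc.prod measurableSet_Ioc)).2
      (ae_of_all _ fun p hp => ?_)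
    simp only [Real.norm_eq_abs]
    split_ifs with h
    · exact hC _ ⟨hp.2.1.le, hp.2.2⟩ _ ⟨hp.1.1.le, hp.1.2⟩ h.le
    · simpa using (abs_nonneg _).trans (hC a ⟨le_rfl, hab⟩ a ⟨le_rfl, hab⟩ le_rfl)
  have hL : ∫ s in a..b, ∫ u in s..b, φ u s = ∫ s, ∫ u, ψ s u ∂ν ∂ν := by
    rw [intervalIntegral.integral_of_le hab]
    refine setIntegral_congr_fun measurableSet_Ioc fun s hs => ?_
    rw [setIntegral_indicator measurableSet_Ioi, Ioc_inter_Ioi, sup_eq_right.2 hs.1.le,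
      intervalIntegral.integral_of_le hs.2]
  have hR : ∫ u in a..b, ∫ s in a..u, φ u s = ∫ u, ∫ s, ψ s u ∂ν ∂ν := by
    rw [intervalIntegral.integral_of_le hab]
    refine setIntegral_congr_fun measurableSet_Ioc fun u hu => ?_
    have hψu : (fun s => ψ s u) = (Iio u).indicator fun s => φ u s := by
      ext s
      simp only [hψ, indicator_apply, mem_Iio]
    have hIoo : Ioc a b ∩ Iio u = Ioo a u := by
      ext s
      simp only [mem_inter_iff, mem_Ioc, mem_Iio, mem_Ioo]
      exact ⟨fun h => ⟨h.1.1, h.2⟩, fun h => ⟨⟨h.1, h.2.le.trans hu.2⟩, h.2⟩⟩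
    rw [hψu, setIntegral_indicator measurableSet_Iio, hIoo, intervalIntegral.integral_of_le hu.1.le,
      integral_Ioc_eq_integral_Ioo]
  rw [hL, hR, integral_integral_swap hint]

lemma norm_integral_le_one [IsProbabilityMeasure P] {f : Ω → ℝ} (h : ∀ᵐ ω ∂P, ‖f ω‖ ≤ 1) :
    ‖∫ ω, f ω ∂P‖ ≤ 1 := by
  simpa using norm_integral_le_of_norm_le_const h

lemma integral_ite_le_mul_add_measureReal [IsFiniteMeasure P] {η e : Ω → ℝ} {τ : ℝ}
    (hη : NullMeasurableSet {ω | τ < η ω} P) (he : Integrable e P)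
    (he1 : ∀ᵐ ω ∂P, τ < η ω → e ω = 1) :
    ∫ ω, (if η ω ≤ τ then (1 : ℝ) else 0) * e ω ∂P + P.real {ω | τ < η ω} = ∫ ω, e ω ∂P := by
  have hae : (fun ω => (if η ω ≤ τ then (1 : ℝ) else 0) * e ω)
      =ᵐ[P] fun ω => e ω - {ω | τ < η ω}.indicator (fun _ => 1) ω := by
    filter_upwards [he1] with ω h
    by_cases hlt : τ < η ω
    · simp [hlt, h hlt, not_le.2 hlt]
    · simp [hlt, not_lt.1 hlt]
  rw [integral_congr_ae hae, integral_sub he ((integrable_const 1).indicator₀ hη),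
    integral_indicator₀ hη, setIntegral_const, smul_eq_mul, mul_one]
  ring

end Integrals

lemma integral_integral_mul_eq_integral_mul_sub {F S G₀ : ℝ → ℝ} {G : ℝ → ℝ → ℝ} {t C : ℝ}
    (ht : 0 ≤ t) (hF : Measurable F) (hS : Measurable S) (hG : Measurable (Function.uncurry G))
    (hFC : ∀ u ∈ Icc 0 t, |F u| ≤ C) (hSC : ∀ u ∈ Icc 0 t, |S u| ≤ C)
    (hGC : ∀ u ∈ Icc 0 t, ∀ s ∈ Icc 0 u, |G u s| ≤ C)
    (hSeq : ∀ u ∈ Icc 0 t, S u = G₀ u + ∫ s in 0..u, G u s * (S s * F s)) :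
    ∫ s in 0..t, (∫ u in s..t, F u * G u s) * (S s * F s) = ∫ u in 0..t, F u * (S u - G₀ u) := by
  have hC : 0 ≤ C := (abs_nonneg _).trans (hFC 0 ⟨le_rfl, ht⟩)
  calc ∫ s in 0..t, (∫ u in s..t, F u * G u s) * (S s * F s)
      = ∫ s in 0..t, ∫ u in s..t, F u * G u s * (S s * F s) := by
        simp only [intervalIntegral.integral_mul_const]
    _ = ∫ u in 0..t, ∫ s in 0..u, F u * G u s * (S s * F s) := by
        refine integral_integral_swap_triangle (C := C * C * (C * C)) ht
          (((hF.comp measurable_fst).mul hG).mul ((hS.mul hF).comp measurable_snd))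
          fun u hu s hs hsu => ?_
        simp only [abs_mul]
        exact mul_le_mul (mul_le_mul (hFC u hu) (hGC u hu s ⟨hs.1, hsu⟩) (abs_nonneg _) hC)
          (mul_le_mul (hSC s hs) (hFC s hs) (abs_nonneg _) hC) (by positivity) (by positivity)
    _ = ∫ u in 0..t, F u * (S u - G₀ u) := by
        refine intervalIntegral.integral_congr fun u hu => ?_
        rw [uIcc_of_le ht] at hu
        simp only [mul_assoc, intervalIntegral.integral_const_mul]
        rw [hSeq u hu]
        ring

theorem one_sub_integral_add_integral_eq_one {F S G₀ : ℝ → ℝ} {G : ℝ → ℝ → ℝ} {t C : ℝ}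
    (ht : 0 ≤ t) (hF : Measurable F) (hS : Measurable S) (hG₀ : Measurable G₀)
    (hG : Measurable (Function.uncurry G)) (hFC : ∀ u ∈ Icc 0 t, |F u| ≤ C)
    (hSC : ∀ u ∈ Icc 0 t, |S u| ≤ C) (hG₀C : ∀ u ∈ Icc 0 t, |G₀ u| ≤ C)
    (hGC : ∀ u ∈ Icc 0 t, ∀ s ∈ Icc 0 u, |G u s| ≤ C)
    (hSeq : ∀ u ∈ Icc 0 t, S u = G₀ u + ∫ s in 0..u, G u s * (S s * F s)) :
    (1 - ∫ u in 0..t, F u * G₀ u) + ∫ s in 0..t, (1 - ∫ u in s..t, F u * G u s) * (S s * F s)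
      = 1 := by
  have hC : 0 ≤ C := (abs_nonneg _).trans (hFC 0 ⟨le_rfl, ht⟩)
  have hJ : ∀ s ∈ Icc 0 t, |∫ u in s..t, F u * G u s| ≤ C * C * t := fun s hs => by
    rw [← Real.norm_eq_abs]
    refine (intervalIntegral.norm_integral_le_of_norm_le_const (C := C * C) fun u hu => ?_).trans ?_
    · rw [uIoc_of_le hs.2] at hu
      rw [norm_mul]
      exact mul_le_mul (hFC u ⟨hs.1.trans hu.1.le, hu.2⟩)
        (hGC u ⟨hs.1.trans hu.1.le, hu.2⟩ s ⟨hs.1, hu.1.le⟩) (norm_nonneg _) hC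
    · rw [abs_of_nonneg (sub_nonneg.2 hs.2)]
      exact mul_le_mul_of_nonneg_left (by linarith [hs.1]) (mul_nonneg hC hC)
  have hSF : Measurable fun s => S s * F s := hS.mul hF
  have hWi : IntervalIntegrable (fun s => S s * F s) volume 0 t :=
    hSF.intervalIntegrable_of_abs_le (C := C * C) ht fun s hs => by
      rw [abs_mul]; exact mul_le_mul (hSC s hs) (hFC s hs) (abs_nonneg _) hC
  have hJWi : IntervalIntegrable (fun s => (∫ u in s..t, F u * G u s) * (S s * F s)) volume 0 t :=
    hWi.bdd_mul (measurable_intervalIntegral_param (k := fun s u => F u * G u s)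
      ((hF.comp measurable_snd).mul (hG.comp measurable_swap)) measurable_id measurable_const) ht hJ
  have hFSG : Measurable fun u => F u * (S u - G₀ u) := hF.mul (hS.sub hG₀)
  have hFSGi : IntervalIntegrable (fun u => F u * (S u - G₀ u)) volume 0 t :=
    hFSG.intervalIntegrable_of_abs_le (C := C * (C + C)) ht fun u hu => by
      rw [abs_mul]
      exact mul_le_mul (hFC u hu) ((abs_sub _ _).trans (add_le_add (hSC u hu) (hG₀C u hu)))
        (abs_nonneg _) hC
  simp only [sub_mul, one_mul]
  rw [intervalIntegral.integral_sub hWi hJWi,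
    integral_integral_mul_eq_integral_mul_sub ht hF hS hG hFC hSC hGC hSeq,
    ← intervalIntegral.integral_sub hWi hFSGi,
    intervalIntegral.integral_congr fun u _ => show S u * F u - F u * (S u - G₀ u) = F u * G₀ u
      by ring]
  ring

section Escape

/-- The probability that an individual with susceptibility `g` escapes infection by the force
of infection `F` during `[a, b]`. -/
def escape (g F : ℝ → ℝ) (a b : ℝ) : ℝ :=
  Real.exp (-∫ r in a..b, g r * F r)

lemma escape_pos (g F : ℝ → ℝ) (a b : ℝ) : 0 < escape g F a b :=
  Real.exp_pos _

lemma escape_le_one {g F : ℝ → ℝ} {a b : ℝ} (hab : a ≤ b) (h : ∀ r ∈ Icc a b, 0 ≤ g r * F r) :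
    escape g F a b ≤ 1 :=
  Real.exp_le_one_iff.2 (neg_nonpos.2 (intervalIntegral.integral_nonneg hab h))

lemma escape_eq_one {g F : ℝ → ℝ} {a b : ℝ} (hab : a ≤ b) (h : ∀ r ∈ Icc a b, g r = 0) :
    escape g F a b = 1 := by
  rw [escape, intervalIntegral.integral_congr (g := fun _ => 0) fun r hr => by
    rw [uIcc_of_le hab] at hr; simp [h r hr]]
  simp

lemma escape_congr {F F' : ℝ → ℝ} (hF : EqOn F F' (Ici 0)) {a b : ℝ} (ha : 0 ≤ a) (hab : a ≤ b)
    (g : ℝ → ℝ) : escape g F a b = escape g F' a b := by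
  rw [escape, escape, intervalIntegral.integral_congr fun r hr => ?_]
  rw [uIcc_of_le hab] at hr
  simp only [hF (ha.trans hr.1 : 0 ≤ r)]

lemma measurable_escape {α : Type*} [MeasurableSpace α] {g : α → ℝ → ℝ}
    (hg : Measurable (Function.uncurry g)) {F : ℝ → ℝ} (hF : Measurable F) {a b : α → ℝ}
    (ha : Measurable a) (hb : Measurable b) :
    Measurable fun p => escape (g p) F (a p) (b p) :=
  (measurable_intervalIntegral_param (hg.mul (hF.comp measurable_snd)) ha hb).neg.exp

end Escape

section Susceptibility

structure IsSusceptibility_s11 (P : Measure Ω) (g : Ω → ℝ → ℝ) (a : ℝ) : Prop where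
  measurable : Measurable (Function.uncurry g)
  mem_Icc : ∀ᵐ ω ∂P, ∀ u, a ≤ u → g ω u ∈ Icc 0 1
  continuousWithinAt : ∀ᵐ ω ∂P, ∀ u, a ≤ u → ContinuousWithinAt (g ω) (Ici u) u

variable {g : Ω → ℝ → ℝ} {F : ℝ → ℝ} {a b : ℝ}

lemma IsSusceptibility_s11.shift (hg : IsSusceptibility_s11 P g 0) (s : ℝ) :
    IsSusceptibility_s11 P (fun ω r => g ω (r - s)) s where
  measurable := hg.measurable.comp (measurable_fst.prodMk (measurable_snd.sub_const s))
  mem_Icc := hg.mem_Icc.mono fun _ h u hu => h (u - s) (sub_nonneg.2 hu)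
  continuousWithinAt := hg.continuousWithinAt.mono fun _ h u hu =>
    (h (u - s) (sub_nonneg.2 hu)).comp (f := fun r => r - s)
      (continuous_sub_right s).continuousWithinAt fun _ hr => sub_le_sub_right hr s

lemma IsSusceptibility_s11.ae_norm_escape_le_one (hg : IsSusceptibility_s11 P g a)
    (hF0 : ∀ u, a ≤ u → 0 ≤ F u) :
    ∀ᵐ ω ∂P, ∀ u, a ≤ u →
      ‖escape (g ω) F a u‖ ≤ 1 ∧ ‖g ω u * escape (g ω) F a u‖ ≤ 1 := by
  filter_upwards [hg.mem_Icc] with ω h u hu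
  have he : ‖escape (g ω) F a u‖ ≤ 1 := by
    rw [Real.norm_of_nonneg (escape_pos _ _ _ _).le]
    exact escape_le_one hu fun r hr => mul_nonneg (h r hr.1).1 (hF0 r hr.1)
  refine ⟨he, ?_⟩
  rw [norm_mul, Real.norm_of_nonneg (h u hu).1]
  exact mul_le_one₀ (h u hu).2 (norm_nonneg _) he

lemma IsSusceptibility_s11.integrable_escape [IsFiniteMeasure P] (hg : IsSusceptibility_s11 P g a)
    (hF : Measurable F) (hF0 : ∀ u, a ≤ u → 0 ≤ F u) (hab : a ≤ b) :
    Integrable (fun ω => escape (g ω) F a b) P :=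
  Integrable.of_bound (measurable_escape hg.measurable hF measurable_const
    measurable_const).aestronglyMeasurable 1 ((hg.ae_norm_escape_le_one hF0).mono
      fun _ h => (h b hab).1)

lemma IsSusceptibility_s11.integral_integral_mul_escape [IsFiniteMeasure P]
    (hg : IsSusceptibility_s11 P g a) (hF : Measurable F) (hF0 : ∀ u, a ≤ u → 0 ≤ F u) {C : ℝ}
    (hFC : ∀ u ∈ Icc a b, |F u| ≤ C) (hab : a ≤ b) :
    ∫ ω, (∫ u in a..b, g ω u * F u * escape (g ω) F a u) ∂P
      = ∫ u in a..b, F u * ∫ ω, g ω u * escape (g ω) F a u ∂P := by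
  have hint : Integrable (Function.uncurry fun ω u => g ω u * F u * escape (g ω) F a u)
      (P.prod (volume.restrict (Ioc a b))) := by
    refine Integrable.of_bound (C := C) (Measurable.aestronglyMeasurable ?_) ?_
    · exact (hg.measurable.mul (hF.comp measurable_snd)).mul (measurable_escape
        (g := fun p : Ω × ℝ => g p.1) (hg.measurable.comp (measurable_fst.fst.prodMk
          measurable_snd)) hF measurable_const measurable_snd)
    filter_upwards [Measure.quasiMeasurePreserving_fst.ae (hg.ae_norm_escape_le_one hF0),
      Measure.quasiMeasurePreserving_snd.ae (ae_restrict_mem measurableSet_Ioc)] with p h1 h2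
    calc ‖g p.1 p.2 * F p.2 * escape (g p.1) F a p.2‖
        = ‖g p.1 p.2 * escape (g p.1) F a p.2‖ * |F p.2| := by
          rw [norm_mul, norm_mul, norm_mul, Real.norm_eq_abs (F p.2)]; ring
      _ ≤ 1 * C := mul_le_mul (h1 p.2 h2.1.le).2 (hFC p.2 ⟨h2.1.le, h2.2⟩) (abs_nonneg _)
          zero_le_one
      _ = C := one_mul C
  simp_rw [intervalIntegral.integral_of_le hab]
  rw [integral_integral_swap hint]
  congr 1 with u
  rw [← integral_const_mul]
  congr 1 with ω
  ring

theorem IsSusceptibility_s11.integral_escape [IsProbabilityMeasure P] (hg : IsSusceptibility_s11 P g a)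
    (hF : Measurable F) (hFc : Cadlag F) (hF0 : ∀ u, 0 ≤ u → 0 ≤ F u) (ha : 0 ≤ a)
    (hab : a ≤ b) :
    ∫ ω, escape (g ω) F a b ∂P = 1 - ∫ u in a..b, F u * ∫ ω, g ω u * escape (g ω) F a u ∂P := by
  obtain ⟨C, hC⟩ := hFc.exists_bound b
  have hFC : ∀ u ∈ Icc a b, |F u| ≤ C := fun u hu => hC u ⟨ha.trans hu.1, hu.2⟩
  have hF0' : ∀ u, a ≤ u → 0 ≤ F u := fun u hu => hF0 u (ha.trans hu)
  have hpath : ∀ᵐ ω ∂P,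
      ∫ u in a..b, g ω u * F u * escape (g ω) F a u = 1 - escape (g ω) F a b := by
    filter_upwards [hg.mem_Icc, hg.continuousWithinAt] with ω h01 hrc
    have hgF : Measurable fun u => g ω u * F u :=
      (hg.measurable.comp measurable_prodMk_left).mul hF
    refine integral_mul_exp_neg_integral hab hgF ?_
      fun u hu => (hrc u hu.1).mul (hFc.1 u (ha.trans hu.1))
    refine hgF.intervalIntegrable_of_abs_le (C := C) hab fun u hu => ?_
    rw [abs_mul, abs_of_nonneg (h01 u hu.1).1]
    exact (mul_le_of_le_one_left (abs_nonneg _) (h01 u hu.1).2).trans (hFC u hu)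
  have key : ∫ ω, (∫ u in a..b, g ω u * F u * escape (g ω) F a u) ∂P
      = ∫ ω, (1 - escape (g ω) F a b) ∂P := integral_congr_ae hpath
  rw [hg.integral_integral_mul_escape hF hF0' hFC hab,
    integral_sub (integrable_const 1) (hg.integrable_escape hF hF0' hab)] at key
  simp only [integral_const, probReal_univ, smul_eq_mul, one_mul] at key
  linarith

lemma measurable_integral_mul_escape [SFinite P] (hg : Measurable (Function.uncurry g))
    (hF : Measurable F) (a : ℝ) : Measurable fun u => ∫ ω, g ω u * escape (g ω) F a u ∂P := by
  have hm : Measurable fun q : ℝ × Ω => g q.2 q.1 * escape (g q.2) F a q.1 :=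
    (hg.comp measurable_swap).mul (measurable_escape (g := fun (p : ℝ × Ω) => g p.2)
      (hg.comp (measurable_fst.snd.prodMk measurable_snd)) hF measurable_const measurable_fst)
  exact hm.stronglyMeasurable.integral_prod_right'.measurable

lemma measurable_integral_escape_shift [SFinite P] (hg : Measurable (Function.uncurry g))
    (hF : Measurable F) (t : ℝ) :
    Measurable fun s => ∫ ω, escape (fun r => g ω (r - s)) F s t ∂P :=
  (measurable_escape (g := fun (p : ℝ × Ω) r => g p.2 (r - p.1))
    (hg.comp (measurable_fst.snd.prodMk (measurable_snd.sub measurable_fst.fst))) hF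
    measurable_fst measurable_const).stronglyMeasurable.integral_prod_right'.measurable

lemma measurable_integral_mul_escape_shift [SFinite P] (hg : Measurable (Function.uncurry g))
    (hF : Measurable F) :
    Measurable fun p : ℝ × ℝ =>
      ∫ ω, g ω (p.1 - p.2) * escape (fun r => g ω (r - p.2)) F p.2 p.1 ∂P := by
  have hm : Measurable fun q : (ℝ × ℝ) × Ω =>
      g q.2 (q.1.1 - q.1.2) * escape (fun r => g q.2 (r - q.1.2)) F q.1.2 q.1.1 :=
    (hg.comp (measurable_snd.prodMk (measurable_fst.fst.sub measurable_fst.snd))).mul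
      (measurable_escape (g := fun (p : (ℝ × ℝ) × Ω) r => g p.2 (r - p.1.2))
        (hg.comp (measurable_fst.snd.prodMk (measurable_snd.sub measurable_fst.fst.snd))) hF
        measurable_fst.snd measurable_fst.fst)
  exact hm.stronglyMeasurable.integral_prod_right'.measurable

theorem integral_escape_add_integral_eq_one [IsProbabilityMeasure P] {γ₀ γ : Ω → ℝ → ℝ}
    (hγ₀ : IsSusceptibility_s11 P γ₀ 0) (hγ : IsSusceptibility_s11 P γ 0) {S : ℝ → ℝ}
    (hS : Measurable S) (hF : Measurable F) (hSc : Cadlag S) (hFc : Cadlag F)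
    (hF0 : ∀ u, 0 ≤ u → 0 ≤ F u) {t : ℝ} (ht : 0 ≤ t)
    (hSeq : ∀ u ∈ Icc 0 t, S u = (∫ ω, γ₀ ω u * escape (γ₀ ω) F 0 u ∂P)
      + ∫ s in 0..u, (∫ ω, γ ω (u - s) * escape (fun r => γ ω (r - s)) F s u ∂P) * (S s * F s)) :
    (∫ ω, escape (γ₀ ω) F 0 t ∂P)
      + ∫ s in 0..t, (∫ ω, escape (fun r => γ ω (r - s)) F s t ∂P) * (S s * F s) = 1 := by
  obtain ⟨CS, hCS⟩ := hSc.exists_bound t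
  obtain ⟨CF, hCF⟩ := hFc.exists_bound t
  have hE : EqOn (fun s => (∫ ω, escape (fun r => γ ω (r - s)) F s t ∂P) * (S s * F s))
      (fun s => (1 - ∫ u in s..t, F u *
        ∫ ω, γ ω (u - s) * escape (fun r => γ ω (r - s)) F s u ∂P) * (S s * F s)) (uIcc 0 t) :=
    fun s hs => by
      rw [uIcc_of_le ht] at hs
      simp only [(hγ.shift s).integral_escape hF hFc hF0 hs.1 hs.2]
  rw [hγ₀.integral_escape hF hFc hF0 le_rfl ht, intervalIntegral.integral_congr hE]
  refine one_sub_integral_add_integral_eq_one (C := max (max CS CF) 1) ht hF hS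
    (measurable_integral_mul_escape hγ₀.measurable hF 0)
    (measurable_integral_mul_escape_shift hγ.measurable hF)
    (fun u hu => (hCF u hu).trans ((le_max_right _ _).trans (le_max_left _ _)))
    (fun u hu => (hCS u hu).trans ((le_max_left _ _).trans (le_max_left _ _)))
    (fun u hu => (norm_integral_le_one ((hγ₀.ae_norm_escape_le_one hF0).mono
      fun _ h => (h u hu.1).2)).trans (le_max_right _ _))
    (fun u _ s hs => (norm_integral_le_one (((hγ.shift s).ae_norm_escape_le_one
      fun r hr => hF0 r (hs.1.trans hr)).mono fun _ h => (h u hs.2).2)).trans (le_max_right _ _))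
    hSeq

end Susceptibility

section InfectiousPeriod

lemma lt_sSup_setOf_pos_iff {f : ℝ → ℝ} (hf : ∀ x, 0 ≤ x → ContinuousWithinAt f (Ici x) x)
    {τ : ℝ} (hτ : 0 ≤ τ) :
    τ < sSup {s | 0 ≤ s ∧ 0 < f s} ↔
      (∃ n : ℕ, ∀ q : ℚ, (n : ℝ) < q → f q ≤ 0) ∧ ∃ q : ℚ, τ < q ∧ 0 < f q := by
  set A := {s : ℝ | 0 ≤ s ∧ 0 < f s}
  constructor
  · intro h
    obtain ⟨M, hM⟩ : BddAbove A := by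
      by_contra hA
      rw [Real.sSup_of_not_bddAbove hA] at h
      linarith
    have hne : A.Nonempty := by
      by_contra hA
      rw [not_nonempty_iff_eq_empty.1 hA, Real.sSup_empty] at h
      linarith
    obtain ⟨s, hs, hτs⟩ := exists_lt_of_lt_csSup hne h
    obtain ⟨q, hsq, hq⟩ := exists_rat_ge_pos_of_continuousWithinAt (hf s hs.1) hs.2
    refine ⟨⟨⌈M⌉₊, fun q' hq' => not_lt.1 fun hpos => ?_⟩, q, hτs.trans_le hsq, hq⟩
    have := hM ⟨(Nat.cast_nonneg _).trans hq'.le, hpos⟩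
    linarith [Nat.le_ceil M]
  · rintro ⟨⟨n, hn⟩, q, hτq, hq⟩
    have hbdd : BddAbove A := by
      refine ⟨n, fun s hs => ?_⟩
      obtain ⟨q', hsq', hq'⟩ := exists_rat_ge_pos_of_continuousWithinAt (hf s hs.1) hs.2
      exact hsq'.trans (not_lt.1 fun h => (hn q' h).not_gt hq')
    exact hτq.trans_le (le_csSup hbdd ⟨hτ.trans hτq.le, hq⟩)

lemma nullMeasurableSet_lt_etaSup {lam : Ω → ℝ → ℝ} (hlam : Measurable (Function.uncurry lam))
    (hrc : ∀ᵐ ω ∂P, ∀ x, 0 ≤ x → ContinuousWithinAt (lam ω) (Ici x) x) {τ : ℝ} (hτ : 0 ≤ τ) :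
    NullMeasurableSet {ω | τ < etaSup lam ω} P := by
  have hlamx : ∀ x, Measurable fun ω => lam ω x :=
    fun x => hlam.comp (measurable_id.prodMk measurable_const)
  have hmeas : MeasurableSet {ω | (∃ n : ℕ, ∀ q : ℚ, (n : ℝ) < q → lam ω q ≤ 0) ∧
      ∃ q : ℚ, τ < q ∧ 0 < lam ω q} := by
    refine measurableSet_setOfPred.2 (.and (.exists fun n => .forall fun q => ?_)
      (.exists fun q => .and measurable_const ?_))
    · exact measurable_const.imp (measurableSet_le (hlamx q) measurable_const).mem
    · exact (measurableSet_lt measurable_const (hlamx q)).mem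
  refine hmeas.nullMeasurableSet.congr ?_
  filter_upwards [hrc] with ω hω
  exact propext (lt_sSup_setOf_pos_iff hω hτ).symm

lemma IbarZero_mul_FZeroc [IsFiniteMeasure P] (lam0 : Ω → ℝ → ℝ) {t : ℝ} (ht : 0 ≤ t) :
    IbarZero P lam0 * FZeroc P lam0 t = survFc P lam0 t := by
  rcases eq_or_ne (IbarZero P lam0) 0 with h | h
  · have h0 : P {ω | 0 < etaSup lam0 ω} = 0 := by
      rw [IbarZero, ENNReal.toReal_eq_zero_iff] at h
      exact h.resolve_right (measure_ne_top _ _)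
    rw [h, zero_mul, survFc,
      measure_mono_null (s := {ω | t < etaSup lam0 ω}) (fun ω hω => ht.trans_lt hω) h0,
      ENNReal.toReal_zero]
  · exact mul_div_cancel₀ _ h

lemma antitone_survFc [IsFiniteMeasure P] (lam : Ω → ℝ → ℝ) : Antitone (survFc P lam) :=
  fun _ _ hxy => ENNReal.toReal_mono (measure_ne_top _ _) (measure_mono fun _ hω => hxy.trans_lt hω)

end InfectiousPeriod

section Model

structure IsInfectionProfile (P : Measure Ω) (lam gam : Ω → ℝ → ℝ) : Prop where
  measurable_lam : Measurable (Function.uncurry lam)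
  continuousWithinAt_lam : ∀ᵐ ω ∂P, ∀ u, 0 ≤ u → ContinuousWithinAt (lam ω) (Ici u) u
  susceptibility : IsSusceptibility_s11 P gam 0
  support : ∀ᵐ ω ∂P, ∀ s u, 0 ≤ s → 0 ≤ u → 0 < lam ω s → 0 < gam ω u → s ≤ u

variable {lam0 gam0 lam gam : Ω → ℝ → ℝ} {S F : ℝ → ℝ} {t : ℝ}

lemma BaseContext.isInfectionProfile_initial {lamStar : ℝ}
    (h : BaseContext P lamStar lam0 gam0 lam gam) : IsInfectionProfile P lam0 gam0 := by
  obtain ⟨-, hlam0, hgam0, -, -, hcad, hbd, -, hsupp0⟩ := h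
  exact ⟨hlam0, hcad.mono fun _ h => h.1.1, ⟨hgam0, hbd.mono fun _ h u hu => (h u hu).2.2.1,
    hcad.mono fun _ h => h.2.1.1⟩, hsupp0⟩

lemma BaseContext.isInfectionProfile {lamStar : ℝ}
    (h : BaseContext P lamStar lam0 gam0 lam gam) : IsInfectionProfile P lam gam := by
  obtain ⟨-, -, -, hlam, hgam, hcad, hbd, hsupp, -⟩ := h
  exact ⟨hlam, hcad.mono fun _ h => h.2.2.1.1, ⟨hgam, hbd.mono fun _ h u hu => (h u hu).2.2.2,
    hcad.mono fun _ h => h.2.2.2.1⟩, hsupp⟩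

lemma IsInfectionProfile.ae_gam_eq_zero (h : IsInfectionProfile P lam gam) :
    ∀ᵐ ω ∂P, ∀ r, 0 ≤ r → r < etaSup lam ω → gam ω r = 0 := by
  filter_upwards [h.support, h.susceptibility.mem_Icc] with ω hsupp h01 r hr hlt
  refine (((h01 r hr).1.lt_or_eq).resolve_left fun hpos => hlt.not_ge ?_).symm
  exact Real.sSup_le (fun s hs => hsupp s r hs.1 hr hs.2 hpos) hr

lemma IsInfectionProfile.integral_ite_mul_escape_add_survFc [IsFiniteMeasure P]
    (h : IsInfectionProfile P lam gam) (hF : Measurable F) (hF0 : ∀ u, 0 ≤ u → 0 ≤ F u) {s : ℝ}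
    (hs : 0 ≤ s) (hst : s ≤ t) :
    (∫ ω, (if etaSup lam ω ≤ t - s then (1 : ℝ) else 0) * escape (fun r => gam ω (r - s)) F s t ∂P)
      + survFc P lam (t - s) = ∫ ω, escape (fun r => gam ω (r - s)) F s t ∂P := by
  refine integral_ite_le_mul_add_measureReal
    (nullMeasurableSet_lt_etaSup h.measurable_lam h.continuousWithinAt_lam (sub_nonneg.2 hst))
    ((h.susceptibility.shift s).integrable_escape hF (fun u hu => hF0 u (hs.trans hu)) hst) ?_
  filter_upwards [h.ae_gam_eq_zero] with ω hω hlt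
  exact escape_eq_one hst fun r hr =>
    hω (r - s) (sub_nonneg.2 hr.1) ((sub_le_sub_right hr.2 s).trans_lt hlt)

/-- The paper's `Ū(t)`, the fraction of the population that is not infectious at time `t`. -/
def Ubar (P : Measure Ω) (lam0 gam0 lam gam : Ω → ℝ → ℝ) (S F : ℝ → ℝ) (t : ℝ) : ℝ :=
  (∫ ω, (if etaSup lam0 ω ≤ t then (1 : ℝ) else 0) * escape (gam0 ω) F 0 t ∂P)
    + ∫ s in (0 : ℝ)..t, (∫ ω, (if etaSup lam ω ≤ t - s then (1 : ℝ) else 0)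
        * escape (fun r => gam ω (r - s)) F s t ∂P) * (S s * F s)

theorem Ubar_add_IbarFun_eq_one_of_measurable [IsProbabilityMeasure P]
    (h₀ : IsInfectionProfile P lam0 gam0) (h : IsInfectionProfile P lam gam)
    (hS : Measurable S) (hF : Measurable F) (hSc : Cadlag S) (hFc : Cadlag F)
    (hF0 : ∀ u, 0 ≤ u → 0 ≤ F u) (ht : 0 ≤ t)
    (hSeq : ∀ u ∈ Icc 0 t, S u = (∫ ω, gam0 ω u * escape (gam0 ω) F 0 u ∂P)
      + ∫ s in 0..u, (∫ ω, gam ω (u - s) * escape (fun r => gam ω (r - s)) F s u ∂P)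
          * (S s * F s)) :
    Ubar P lam0 gam0 lam gam S F t + IbarFun P lam0 lam S F t = 1 := by
  have hγ := h.susceptibility
  have habs₀ : (∫ ω, (if etaSup lam0 ω ≤ t then (1 : ℝ) else 0) * escape (gam0 ω) F 0 t ∂P)
      + IbarZero P lam0 * FZeroc P lam0 t = ∫ ω, escape (gam0 ω) F 0 t ∂P := by
    simpa only [sub_zero, IbarZero_mul_FZeroc lam0 ht]
      using h₀.integral_ite_mul_escape_add_survFc hF hF0 le_rfl ht
  have hWi : IntervalIntegrable (fun s => S s * F s) volume 0 t := by
    obtain ⟨C, hC⟩ := (hSc.mul hFc).exists_bound t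
    exact (hS.mul hF).intervalIntegrable_of_abs_le ht hC
  have hEWi := hWi.bdd_mul (measurable_integral_escape_shift hγ.measurable hF t) ht
    fun s hs => norm_integral_le_one (((hγ.shift s).ae_norm_escape_le_one
      fun u hu => hF0 u (hs.1.trans hu)).mono fun _ h => (h t hs.2).1)
  have hFcWi := hWi.bdd_mul (Y := fun s => survFc P lam (t - s)) (C := 1)
    ((antitone_survFc lam).measurable.comp (measurable_const.sub measurable_id)) ht
    fun s _ => by rw [survFc, abs_of_nonneg ENNReal.toReal_nonneg]; exact measureReal_le_one
  have hflow : (∫ s in 0..t, (∫ ω, (if etaSup lam ω ≤ t - s then (1 : ℝ) else 0)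
        * escape (fun r => gam ω (r - s)) F s t ∂P) * (S s * F s))
      + ∫ s in 0..t, survFc P lam (t - s) * (S s * F s)
      = ∫ s in 0..t, (∫ ω, escape (fun r => gam ω (r - s)) F s t ∂P) * (S s * F s) := by
    rw [← eq_sub_iff_add_eq, ← intervalIntegral.integral_sub hEWi hFcWi]
    refine intervalIntegral.integral_congr fun s hs => ?_
    rw [uIcc_of_le ht] at hs
    rw [← h.integral_ite_mul_escape_add_survFc hF hF0 hs.1 hs.2]
    ring
  rw [Ubar, IbarFun, add_add_add_comm, habs₀, hflow]
  exact integral_escape_add_integral_eq_one h₀.susceptibility hγ hS hF hSc hFc hF0 ht hSeq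

lemma integral_mul_mul_congr {Y Y' S' F' : ℝ → ℝ} (ht : 0 ≤ t)
    (hY : ∀ s ∈ Icc 0 t, Y s = Y' s) (hS : EqOn S S' (Ici 0)) (hF : EqOn F F' (Ici 0)) :
    ∫ s in 0..t, Y s * (S s * F s) = ∫ s in 0..t, Y' s * (S' s * F' s) :=
  intervalIntegral.integral_congr fun s hs => by
    rw [uIcc_of_le ht] at hs
    simp only [hY s hs, hS (mem_Ici.2 hs.1), hF (mem_Ici.2 hs.1)]

lemma Ubar_congr {S' F' : ℝ → ℝ} (ht : 0 ≤ t) (hS : EqOn S S' (Ici 0)) (hF : EqOn F F' (Ici 0)) :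
    Ubar P lam0 gam0 lam gam S F t = Ubar P lam0 gam0 lam gam S' F' t := by
  simp only [Ubar, escape_congr hF le_rfl ht]
  congr 1
  exact integral_mul_mul_congr ht (fun s hs => by simp only [escape_congr hF hs.1 hs.2]) hS hF

lemma IbarFun_congr {S' F' : ℝ → ℝ} (ht : 0 ≤ t) (hS : EqOn S S' (Ici 0))
    (hF : EqOn F F' (Ici 0)) : IbarFun P lam0 lam S F t = IbarFun P lam0 lam S' F' t := by
  rw [IbarFun, IbarFun, integral_mul_mul_congr ht (fun _ _ => rfl) hS hF]

theorem Ubar_add_IbarFun_eq_one [IsProbabilityMeasure P]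
    (h₀ : IsInfectionProfile P lam0 gam0) (h : IsInfectionProfile P lam gam)
    (hSc : Cadlag S) (hFc : Cadlag F) (hF0 : ∀ u, 0 ≤ u → 0 ≤ F u) (ht : 0 ≤ t)
    (hSeq : ∀ u, 0 ≤ u → S u = (∫ ω, gam0 ω u * escape (gam0 ω) F 0 u ∂P)
      + ∫ s in 0..u, (∫ ω, gam ω (u - s) * escape (fun r => gam ω (r - s)) F s u ∂P)
          * (S s * F s)) :
    Ubar P lam0 gam0 lam gam S F t + IbarFun P lam0 lam S F t = 1 := by
  obtain ⟨Sm, hSm, hSmc, hSSm⟩ := hSc.exists_measurable_eqOn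
  obtain ⟨Fm, hFm, hFmc, hFFm⟩ := hFc.exists_measurable_eqOn
  rw [Ubar_congr ht hSSm hFFm, IbarFun_congr ht hSSm hFFm]
  refine Ubar_add_IbarFun_eq_one_of_measurable h₀ h hSm hFm hSmc hFmc
    (fun u hu => hFFm (mem_Ici.2 hu) ▸ hF0 u hu) ht fun u hu => ?_
  rw [← hSSm (mem_Ici.2 hu.1), hSeq u hu.1]
  simp only [escape_congr hFFm le_rfl hu.1]
  congr 1
  exact integral_mul_mul_congr hu.1 (fun s hs => by simp only [escape_congr hFFm hs.1 hs.2])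
    hSSm hFFm

end Model

/-- For a càdlàg solution `(S̄, F̄)` of the limit epidemic system, the limiting
fractions of uninfectious and infectious individuals satisfy `Ū(t) + Ī(t) = 1` for all `t ≥ 0`. -/
theorem U_plus_I_eq_one
    {Ω : Type*} [MeasurableSpace Ω] (P : Measure Ω) [IsProbabilityMeasure P]
    (lamStar : ℝ) (lam0 gam0 lam gam : Ω → ℝ → ℝ)
    (hctx : BaseContext P lamStar lam0 gam0 lam gam)
    (S F U I : ℝ → ℝ)
    (hsol : IsLimitSolution P lam0 gam0 lam gam S F)
    (hU : ∀ t : ℝ, U t =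
      (∫ ω, (if etaSup lam0 ω ≤ t then (1:ℝ) else 0)
          * Real.exp (- ∫ r in (0:ℝ)..t, gam0 ω r * F r) ∂P)
        + ∫ s in (0:ℝ)..t,
            (∫ ω, (if etaSup lam ω ≤ t - s then (1:ℝ) else 0)
                * Real.exp (- ∫ r in s..t, gam ω (r - s) * F r) ∂P) * (S s * F s))
    (hI : ∀ t : ℝ, I t = IbarZero P lam0 * FZeroc P lam0 t
        + ∫ s in (0:ℝ)..t, survFc P lam (t - s) * (S s * F s)) :
    ∀ t : ℝ, 0 ≤ t → U t + I t = 1 := by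
  intro t ht
  obtain ⟨hScad, hFcad, hnonneg, hSeq, -⟩ := hsol
  rw [hU t, hI t]
  exact Ubar_add_IbarFun_eq_one hctx.isInfectionProfile_initial hctx.isInfectionProfile hScad hFcad
    (fun u hu => (hnonneg u hu).2) ht hSeq

end
end

section
/- Suppose ℙ(γ* = 0) = 0, that x, y : ℝ₊ → ℝ₊ are nonnegative, measurable, and locally integrable with ∫₀^∞ y(t) dt = ∞, and that for all t ≥ 0 one has ∫₀ᵗ 𝔼[exp(−γ*·∫ₛᵗ y(r) dr)]·x(s) y(s) ds ≤ 1. Then limsup_{t→∞} (∫₀ᵗ x(s) y(s) ds)/(∫₀ᵗ y(s) ds) ≤ 1/𝔼[1/γ*], where the right-hand side is interpreted as 0 when 𝔼[1/γ*] = ∞. -/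
open MeasureTheory Filter Set ProbabilityTheory
open scoped ENNReal

noncomputable section

variable {Ω : Type*} [MeasurableSpace Ω]

open scoped NNReal Topology

/-!
Write `Y t = ∫₀ᵗ y`, `X t = ∫₀ᵗ x y`, `k u = 𝔼[exp (-γ* u)]` (the moment generating function of
`γ*` at `-u`) and `K M = ∫₀ᴹ k`. Integrating the hypothesis `∫₀ᵗ k (Y t - Y s) dX(s) ≤ 1` against
`dY(t)` over `[0, τ]` and swapping the two integrals gives `∫₀^τ K (Y τ - Y s) dX(s) ≤ Y τ`, because
the substitution `u = Y t - Y s` turns the inner integral into `K (Y τ - Y s)`. If `σ ≤ τ` is the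
time with `Y τ - Y σ = M`, this yields `K M * X σ ≤ Y τ`, while the hypothesis at time `τ` alone
yields `k M * (X τ - X σ) ≤ 1`. Hence `X τ / Y τ ≤ 1 / K M + 1 / (k M * Y τ)`, so the limsup is at
most `1 / K M`; finally `K M ↑ ∫₀^∞ 𝔼[exp (-γ* u)] du = 𝔼[1 / γ*]` by Tonelli.
-/

theorem LipschitzOnWith.comp_absolutelyContinuousOnInterval {X : Type*} [PseudoMetricSpace X]
    {g : ℝ → X} {f : ℝ → ℝ} {s : Set ℝ} {K : ℝ≥0} {a b : ℝ} (hg : LipschitzOnWith K g s)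
    (hf : AbsolutelyContinuousOnInterval f a b) (hfs : MapsTo f (uIcc a b) s) :
    AbsolutelyContinuousOnInterval (g ∘ f) a b := by
  unfold AbsolutelyContinuousOnInterval at hf ⊢
  refine squeeze_zero' (Eventually.of_forall fun _ ↦ Finset.sum_nonneg fun _ _ ↦ dist_nonneg) ?_
    (by simpa using hf.const_mul (K : ℝ))
  rw [eventually_inf_principal]
  filter_upwards with E hE
  rw [Finset.mul_sum]
  gcongr with i hi
  exact hg.dist_le_mul _ (hfs (hE.1 i hi).1) _ (hfs (hE.1 i hi).2)

theorem intervalIntegral.integral_comp_primitive_mul {g y : ℝ → ℝ} {a b : ℝ} (hg : Continuous g)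
    (hy : IntervalIntegrable y volume a b) :
    ∫ t in a..b, g (∫ r in a..t, y r) * y t = ∫ u in 0..∫ r in a..b, y r, g u := by
  set Y : ℝ → ℝ := fun t ↦ ∫ r in a..t, y r
  set Φ : ℝ → ℝ := fun v ↦ ∫ u in 0..v, g u
  have hΦ : ∀ v, HasDerivAt Φ (g v) v := fun v ↦ (hg.integral_hasStrictDerivAt 0 v).hasDerivAt
  have hY : AbsolutelyContinuousOnInterval Y a b :=
    hy.absolutelyContinuousOnInterval_intervalIntegral left_mem_uIcc
  have hΦ' : deriv Φ = g := funext fun v ↦ (hΦ v).deriv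
  obtain ⟨K, hK⟩ := (contDiff_one_iff_deriv.2 ⟨fun v ↦ (hΦ v).differentiableAt,
    hΦ' ▸ hg⟩).locallyLipschitz.locallyLipschitzOn
    |>.exists_lipschitzOnWith_of_compact (isCompact_uIcc.image_of_continuousOn hY.continuousOn)
  have hΦY := hK.comp_absolutelyContinuousOnInterval hY (mapsTo_image _ _)
  have hderiv : ∀ᵐ t, t ∈ uIoc a b → deriv (Φ ∘ Y) t = g (Y t) * y t := by
    filter_upwards [hy.ae_hasDerivAt_integral] with t ht htab
    exact ((hΦ (Y t)).comp t (ht (uIoc_subset_uIcc htab) a left_mem_uIcc)).deriv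
  rw [← intervalIntegral.integral_congr_ae hderiv, hΦY.integral_deriv_eq_sub]
  simp [Φ, Y]

theorem setLIntegral_setLIntegral_eq_lintegral_indicator {F : ℝ → ℝ → ℝ≥0∞} {A : Set ℝ}
    {B : ℝ → Set ℝ} (hA : MeasurableSet A) (hB : ∀ s, MeasurableSet (B s)) :
    ∫⁻ s in A, ∫⁻ t in B s, F s t
      = ∫⁻ s, ∫⁻ t, {p : ℝ × ℝ | p.1 ∈ A ∧ p.2 ∈ B p.1}.indicator (Function.uncurry F) (s, t) := by
  rw [← lintegral_indicator hA]
  congr 1 with s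
  by_cases hs : s ∈ A
  · rw [indicator_of_mem hs, ← lintegral_indicator (hB s)]
    congr 1 with t
    by_cases ht : t ∈ B s <;> simp [hs, ht]
  · simp [hs]

theorem lintegral_Ioc_lintegral_Ioc_swap {F : ℝ → ℝ → ℝ≥0∞}
    (hF : AEMeasurable (Function.uncurry F) (volume.prod volume)) (a b : ℝ) :
    ∫⁻ s in Ioc a b, ∫⁻ t in Ioc s b, F s t = ∫⁻ t in Ioc a b, ∫⁻ s in Ioo a t, F s t := by
  have hT : MeasurableSet {p : ℝ × ℝ | p.1 ∈ Ioc a b ∧ p.2 ∈ Ioc p.1 b} :=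
    ((measurableSet_lt measurable_const measurable_fst).inter
      (measurableSet_le measurable_fst measurable_const)).inter
      ((measurableSet_lt measurable_fst measurable_snd).inter
        (measurableSet_le measurable_snd measurable_const))
  rw [setLIntegral_setLIntegral_eq_lintegral_indicator measurableSet_Ioc
      (fun _ ↦ measurableSet_Ioc),
    setLIntegral_setLIntegral_eq_lintegral_indicator (F := fun t s ↦ F s t) measurableSet_Ioc
      (fun _ ↦ measurableSet_Ioo), lintegral_lintegral_swap (f := fun s t ↦
      {p : ℝ × ℝ | p.1 ∈ Ioc a b ∧ p.2 ∈ Ioc p.1 b}.indicator (Function.uncurry F) (s, t))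
      (hF.indicator hT)]
  congr 1 with t
  congr 1 with s
  simp only [indicator_apply, mem_ofPred_eq, mem_Ioc, mem_Ioo, Function.uncurry_apply_pair]
  split_ifs <;> first | rfl | (exfalso; grind)

theorem tendsto_setLIntegral_Ioc_atTop (f : ℝ → ℝ≥0∞) (a : ℝ) :
    Tendsto (fun t ↦ ∫⁻ x in Ioc a t, f x) atTop (𝓝 (∫⁻ x in Ioi a, f x)) := by
  simp_rw [← withDensity_apply' f]
  rw [← iUnion_Ioc_right a]
  exact tendsto_measure_iUnion_atTop fun _ _ h ↦ Ioc_subset_Ioc_right h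

theorem ofReal_intervalIntegral_eq_setLIntegral {f : ℝ → ℝ} {a b : ℝ} (hab : a ≤ b)
    (hf : IntervalIntegrable f volume a b) (hf₀ : ∀ x ∈ Ioc a b, 0 ≤ f x) :
    ENNReal.ofReal (∫ x in a..b, f x) = ∫⁻ x in Ioc a b, ENNReal.ofReal (f x) := by
  rw [intervalIntegral.integral_of_le hab]
  exact ofReal_integral_eq_lintegral_ofReal (hf.1) ((ae_restrict_iff' measurableSet_Ioc).2
    (ae_of_all _ hf₀))

theorem MeasureTheory.LocallyIntegrable.intervalIntegrable {f : ℝ → ℝ}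
    (hf : LocallyIntegrable f volume) (a b : ℝ) : IntervalIntegrable f volume a b :=
  (hf.integrableOn_isCompact isCompact_uIcc).intervalIntegrable

theorem MeasureTheory.LocallyIntegrable.continuous_intervalIntegral {f : ℝ → ℝ}
    (hf : LocallyIntegrable f volume) : Continuous fun p : ℝ × ℝ ↦ ∫ x in p.1..p.2, f x := by
  have hF := intervalIntegral.continuous_primitive hf.intervalIntegrable 0
  refine ((hF.comp continuous_snd).sub (hF.comp continuous_fst)).congr fun p ↦ ?_
  exact intervalIntegral.integral_interval_sub_left (hf.intervalIntegrable _ _)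
    (hf.intervalIntegrable _ _)

theorem intervalIntegral.integral_le_integral_of_le_right {f : ℝ → ℝ} {a b b' : ℝ}
    (hf : LocallyIntegrable f volume) (hf₀ : 0 ≤ f) (hb : b ≤ b') :
    ∫ x in a..b, f x ≤ ∫ x in a..b', f x := by
  rw [← integral_add_adjacent_intervals (hf.intervalIntegrable a b) (hf.intervalIntegrable b b')]
  linarith [integral_nonneg (μ := volume) hb fun x _ ↦ hf₀ x]

theorem intervalIntegral.integral_le_integral_of_le_left {f : ℝ → ℝ} {a a' b : ℝ}
    (hf : LocallyIntegrable f volume) (hf₀ : 0 ≤ f) (ha : a' ≤ a) :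
    ∫ x in a..b, f x ≤ ∫ x in a'..b, f x := by
  rw [← integral_add_adjacent_intervals (hf.intervalIntegrable a' a) (hf.intervalIntegrable a b)]
  linarith [integral_nonneg (μ := volume) ha fun x _ ↦ hf₀ x]

theorem locallyIntegrable_indicator_Ici {f : ℝ → ℝ} (hf : ∀ t, IntegrableOn f (Icc 0 t)) :
    LocallyIntegrable ((Ici 0).indicator f) volume := by
  refine locallyIntegrable_iff.2 fun K hK ↦ ?_
  obtain ⟨R, hR⟩ := hK.bddAbove
  rw [IntegrableOn, integrable_indicator_iff measurableSet_Ici, IntegrableOn,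
    Measure.restrict_restrict measurableSet_Ici]
  exact (hf R).mono_set fun u hu ↦ ⟨hu.1, hR hu.2⟩

theorem intervalIntegral.integral_indicator_Ici_of_nonneg {f : ℝ → ℝ} {a b : ℝ} (ha : 0 ≤ a)
    (hb : 0 ≤ b) : ∫ x in a..b, (Ici 0).indicator f x = ∫ x in a..b, f x :=
  integral_congr fun _ hx ↦ indicator_of_mem ((le_min ha hb).trans hx.1) f

theorem tendsto_integral_atTop_of_lintegral_Ioi_eq_top {f : ℝ → ℝ}
    (hf : LocallyIntegrable f volume) (hf₀ : 0 ≤ f)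
    (h : ∫⁻ x in Ioi 0, ENNReal.ofReal (f x) = ⊤) :
    Tendsto (fun t ↦ ∫ x in 0..t, f x) atTop atTop := by
  rw [← ENNReal.tendsto_ofReal_nhds_top, ← h]
  refine (tendsto_setLIntegral_Ioc_atTop _ 0).congr' ?_
  filter_upwards [eventually_ge_atTop 0] with t ht
  exact (ofReal_intervalIntegral_eq_setLIntegral ht (hf.intervalIntegrable 0 t)
    fun x _ ↦ hf₀ x).symm

theorem intervalIntegral.eventually_integral_eq_zero_of_not_integrableOn {f : ℝ → ℝ} {t₀ : ℝ}
    (h : ¬IntegrableOn f (Icc 0 t₀)) : ∀ᶠ t in atTop, ∫ x in 0..t, f x = 0 := by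
  have ht₀ : 0 ≤ t₀ := not_lt.1 fun h₀ ↦ h (by rw [Icc_eq_empty_of_lt h₀]; exact integrableOn_empty)
  filter_upwards [eventually_ge_atTop t₀] with t ht
  refine integral_undef fun hft ↦ h ?_
  refine (intervalIntegrable_iff_integrableOn_Icc_of_le ht₀).1 (hft.mono_set ?_)
  rw [uIcc_of_le ht₀, uIcc_of_le (ht₀.trans ht)]
  exact Icc_subset_Icc_right ht

section RenewalInequality

open intervalIntegral

variable {k q y : ℝ → ℝ}

theorem intervalIntegrable_comp_integral_mul {G : ℝ → ℝ} (hG : Continuous G)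
    (hq : LocallyIntegrable q volume) (hy : LocallyIntegrable y volume) (τ a b : ℝ) :
    IntervalIntegrable (fun s ↦ G (∫ r in s..τ, y r) * q s) volume a b :=
  (hq.intervalIntegrable a b).continuousOn_mul
    (hG.comp (hy.continuous_intervalIntegral.comp
      (continuous_id.prodMk continuous_const))).continuousOn

theorem lintegral_lintegral_kernel_mul_le (hk : Continuous k) (hk₀ : 0 ≤ k)
    (hq : LocallyIntegrable q volume) (hq₀ : 0 ≤ q) (hy : LocallyIntegrable y volume) (hy₀ : 0 ≤ y)
    (hbound : ∀ t, 0 ≤ t → ∫ s in 0..t, k (∫ r in s..t, y r) * q s ≤ 1) {τ : ℝ} (hτ : 0 ≤ τ) :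
    ∫⁻ s in Ioc 0 τ, ∫⁻ t in Ioc s τ, ENNReal.ofReal (k (∫ r in s..t, y r) * y t * q s)
      ≤ ENNReal.ofReal (∫ t in 0..τ, y t) := by
  have hD := hy.continuous_intervalIntegral
  have hmeas : AEMeasurable (fun p : ℝ × ℝ ↦ k (∫ r in p.1..p.2, y r) * y p.2 * q p.1)
      (volume.prod volume) :=
    ((hk.comp hD).measurable.aemeasurable.mul hy.aestronglyMeasurable.aemeasurable.comp_snd).mul
      hq.aestronglyMeasurable.aemeasurable.comp_fst
  rw [lintegral_Ioc_lintegral_Ioc_swap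
      (F := fun s t ↦ ENNReal.ofReal (k (∫ r in s..t, y r) * y t * q s))
      (ENNReal.measurable_ofReal.comp_aemeasurable hmeas),
    ofReal_intervalIntegral_eq_setLIntegral hτ (hy.intervalIntegrable 0 τ) fun t _ ↦ hy₀ t]
  refine setLIntegral_mono' measurableSet_Ioc fun t ht ↦ ?_
  have hcont : Continuous fun s ↦ k (∫ r in s..t, y r) * y t :=
    (hk.comp (hD.comp (continuous_id.prodMk continuous_const))).mul continuous_const
  rw [setLIntegral_congr Ioo_ae_eq_Ioc, ← ofReal_intervalIntegral_eq_setLIntegral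
    (f := fun s ↦ k (∫ r in s..t, y r) * y t * q s) ht.1.le
    ((hq.intervalIntegrable 0 t).continuousOn_mul hcont.continuousOn)
    fun s _ ↦ mul_nonneg (mul_nonneg (hk₀ _) (hy₀ t)) (hq₀ s)]
  refine ENNReal.ofReal_le_ofReal ?_
  calc ∫ s in 0..t, k (∫ r in s..t, y r) * y t * q s
      = y t * ∫ s in 0..t, k (∫ r in s..t, y r) * q s := by
        rw [← intervalIntegral.integral_const_mul]; congr 1 with s; ring
    _ ≤ y t := mul_le_of_le_one_right (hy₀ t) (hbound t ht.1.le)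

theorem integral_primitive_kernel_mul_le (hk : Continuous k) (hk₀ : 0 ≤ k)
    (hq : LocallyIntegrable q volume) (hq₀ : 0 ≤ q) (hy : LocallyIntegrable y volume) (hy₀ : 0 ≤ y)
    (hbound : ∀ t, 0 ≤ t → ∫ s in 0..t, k (∫ r in s..t, y r) * q s ≤ 1) {τ : ℝ} (hτ : 0 ≤ τ) :
    ∫ s in 0..τ, (∫ u in 0..∫ r in s..τ, y r, k u) * q s ≤ ∫ t in 0..τ, y t := by
  have hinner : ∀ s ∈ Ioc 0 τ,
      ENNReal.ofReal ((∫ u in 0..∫ r in s..τ, y r, k u) * q s)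
        = ∫⁻ t in Ioc s τ, ENNReal.ofReal (k (∫ r in s..t, y r) * y t * q s) := by
    intro s hs
    rw [← integral_comp_primitive_mul hk (hy.intervalIntegrable s τ),
      ← intervalIntegral.integral_mul_const]
    exact ofReal_intervalIntegral_eq_setLIntegral hs.2
      (((hy.intervalIntegrable s τ).continuousOn_mul
        (hk.comp (continuous_primitive hy.intervalIntegrable s)).continuousOn).mul_const _)
      fun t _ ↦ mul_nonneg (mul_nonneg (hk₀ _) (hy₀ t)) (hq₀ s)
  have hK₀ : ∀ s ∈ Ioc 0 τ, 0 ≤ (∫ u in 0..∫ r in s..τ, y r, k u) * q s := fun s hs ↦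
    mul_nonneg (integral_nonneg (integral_nonneg hs.2 fun r _ ↦ hy₀ r) fun u _ ↦ hk₀ u) (hq₀ s)
  rw [← ENNReal.ofReal_le_ofReal_iff (integral_nonneg hτ fun t _ ↦ hy₀ t),
    ofReal_intervalIntegral_eq_setLIntegral hτ (intervalIntegrable_comp_integral_mul
      (continuous_primitive (μ := volume) hk.intervalIntegrable 0) hq hy τ 0 τ) hK₀,
    setLIntegral_congr_fun measurableSet_Ioc hinner]
  exact lintegral_lintegral_kernel_mul_le hk hk₀ hq hq₀ hy hy₀ hbound hτ

theorem primitive_kernel_mul_integral_le (hk : Continuous k) (hk₀ : 0 ≤ k)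
    (hq : LocallyIntegrable q volume) (hq₀ : 0 ≤ q) (hy : LocallyIntegrable y volume) (hy₀ : 0 ≤ y)
    (hbound : ∀ t, 0 ≤ t → ∫ s in 0..t, k (∫ r in s..t, y r) * q s ≤ 1) {σ τ M : ℝ}
    (hσ : 0 ≤ σ) (hστ : σ ≤ τ) (hM : M ≤ ∫ r in σ..τ, y r) :
    (∫ u in 0..M, k u) * ∫ s in 0..σ, q s ≤ ∫ t in 0..τ, y t := by
  have hint := intervalIntegrable_comp_integral_mul
    (continuous_primitive (μ := volume) hk.intervalIntegrable 0) hq hy τ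
  calc (∫ u in 0..M, k u) * ∫ s in 0..σ, q s
      = ∫ s in 0..σ, (∫ u in 0..M, k u) * q s := (intervalIntegral.integral_const_mul _ _).symm
    _ ≤ ∫ s in 0..σ, (∫ u in 0..∫ r in s..τ, y r, k u) * q s :=
        integral_mono_on hσ ((hq.intervalIntegrable 0 σ).const_mul _) (hint 0 σ) fun s hs ↦
          mul_le_mul_of_nonneg_right (integral_le_integral_of_le_right hk.locallyIntegrable hk₀
            (hM.trans (integral_le_integral_of_le_left hy hy₀ hs.2))) (hq₀ s)
    _ ≤ ∫ s in 0..τ, (∫ u in 0..∫ r in s..τ, y r, k u) * q s :=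
        integral_mono_interval le_rfl hσ hστ ((ae_restrict_iff' measurableSet_Ioc).2 <|
          ae_of_all _ fun s hs ↦ mul_nonneg
            (integral_nonneg (integral_nonneg hs.2 fun r _ ↦ hy₀ r) fun u _ ↦ hk₀ u) (hq₀ s))
          (hint 0 τ)
    _ ≤ ∫ t in 0..τ, y t :=
        integral_primitive_kernel_mul_le hk hk₀ hq hq₀ hy hy₀ hbound (hσ.trans hστ)

theorem kernel_mul_integral_le_one (hk : Continuous k) (hk_anti : Antitone k) (hk₀ : 0 ≤ k)
    (hq : LocallyIntegrable q volume) (hq₀ : 0 ≤ q) (hy : LocallyIntegrable y volume) (hy₀ : 0 ≤ y)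
    (hbound : ∀ t, 0 ≤ t → ∫ s in 0..t, k (∫ r in s..t, y r) * q s ≤ 1) {σ τ M : ℝ}
    (hσ : 0 ≤ σ) (hστ : σ ≤ τ) (hM : ∫ r in σ..τ, y r ≤ M) :
    k M * ∫ s in σ..τ, q s ≤ 1 := by
  have hint := intervalIntegrable_comp_integral_mul hk hq hy τ
  calc k M * ∫ s in σ..τ, q s
      = ∫ s in σ..τ, k M * q s := (intervalIntegral.integral_const_mul _ _).symm
    _ ≤ ∫ s in σ..τ, k (∫ r in s..τ, y r) * q s :=
        integral_mono_on hστ ((hq.intervalIntegrable σ τ).const_mul _) (hint σ τ) fun s hs ↦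
          mul_le_mul_of_nonneg_right
            (hk_anti ((integral_le_integral_of_le_left hy hy₀ hs.1).trans hM)) (hq₀ s)
    _ ≤ ∫ s in 0..τ, k (∫ r in s..τ, y r) * q s :=
        integral_mono_interval hσ hστ le_rfl
          (ae_of_all _ fun s ↦ mul_nonneg (hk₀ _) (hq₀ s)) (hint 0 τ)
    _ ≤ 1 := hbound τ (hσ.trans hστ)

theorem integral_le_div_add_inv (hk : Continuous k) (hk_anti : Antitone k) (hk₀ : 0 ≤ k)
    (hq : LocallyIntegrable q volume) (hq₀ : 0 ≤ q) (hy : LocallyIntegrable y volume) (hy₀ : 0 ≤ y)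
    (hbound : ∀ t, 0 ≤ t → ∫ s in 0..t, k (∫ r in s..t, y r) * q s ≤ 1) {τ M : ℝ}
    (hM : 0 < M) (hkM : 0 < k M) (hτ : 0 ≤ τ) (hMτ : M ≤ ∫ t in 0..τ, y t) :
    ∫ s in 0..τ, q s ≤ (∫ t in 0..τ, y t) / (∫ u in 0..M, k u) + 1 / k M := by
  obtain ⟨σ, ⟨hσ, hστ⟩, hσM⟩ : ∃ σ ∈ Icc 0 τ, ∫ r in σ..τ, y r = M :=
    intermediate_value_Icc' hτ (hy.continuous_intervalIntegral.comp
      (continuous_id.prodMk continuous_const)).continuousOn ⟨by simp [hM.le], hMτ⟩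
  have hKM : 0 < ∫ u in 0..M, k u :=
    intervalIntegral_pos_of_pos_on (hk.intervalIntegrable 0 M)
      (fun u hu ↦ hkM.trans_le (hk_anti hu.2.le)) hM
  have hhead := primitive_kernel_mul_integral_le hk hk₀ hq hq₀ hy hy₀ hbound hσ hστ hσM.ge
  have htail := kernel_mul_integral_le_one hk hk_anti hk₀ hq hq₀ hy hy₀ hbound hσ hστ hσM.le
  rw [← integral_add_adjacent_intervals (hq.intervalIntegrable 0 σ) (hq.intervalIntegrable σ τ)]
  gcongr
  · rwa [le_div_iff₀' hKM]
  · rwa [le_div_iff₀' hkM]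

theorem limsup_integral_div_integral_le_of_locallyIntegrable (hk : Continuous k)
    (hk_anti : Antitone k) (hk₀ : 0 ≤ k)
    (hq : LocallyIntegrable q volume) (hq₀ : 0 ≤ q) (hy : LocallyIntegrable y volume) (hy₀ : 0 ≤ y)
    (hbound : ∀ t, 0 ≤ t → ∫ s in 0..t, k (∫ r in s..t, y r) * q s ≤ 1)
    (hy_top : Tendsto (fun t ↦ ∫ s in 0..t, y s) atTop atTop) {M : ℝ} (hM : 0 < M)
    (hkM : 0 < k M) :
    limsup (fun t ↦ (∫ s in 0..t, q s) / ∫ s in 0..t, y s) atTop ≤ 1 / ∫ u in 0..M, k u := by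
  have hle : ∀ᶠ t in atTop, (∫ s in 0..t, q s) / (∫ s in 0..t, y s)
      ≤ 1 / (∫ u in 0..M, k u) + 1 / k M / ∫ s in 0..t, y s := by
    filter_upwards [eventually_ge_atTop 0, hy_top.eventually_ge_atTop M] with t ht hMt
    have hYt : 0 < ∫ s in 0..t, y s := hM.trans_le hMt
    rw [div_le_iff₀ hYt, add_mul, div_mul_cancel₀ _ hYt.ne', one_div_mul_eq_div]
    exact integral_le_div_add_inv hk hk_anti hk₀ hq hq₀ hy hy₀ hbound hM hkM ht hMt
  have hlim : Tendsto (fun t ↦ 1 / (∫ u in 0..M, k u) + 1 / k M / ∫ s in 0..t, y s) atTop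
      (𝓝 (1 / ∫ u in 0..M, k u)) := by
    simpa using tendsto_const_nhds.add (tendsto_const_nhds.div_atTop hy_top)
  have hcobdd : IsCoboundedUnder (· ≤ ·) atTop fun t ↦ (∫ s in 0..t, q s) / ∫ s in 0..t, y s :=
    isCoboundedUnder_le_of_eventually_le atTop (x := 0) <| by
      filter_upwards [eventually_ge_atTop 0] with t ht
      exact div_nonneg (integral_nonneg ht fun s _ ↦ hq₀ s) (integral_nonneg ht fun s _ ↦ hy₀ s)
  exact (limsup_le_limsup hle hcobdd hlim.isBoundedUnder_le).trans hlim.limsup_eq.le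

theorem limsup_integral_div_integral_le (hk : Continuous k) (hk_anti : Antitone k) (hk₀ : 0 ≤ k)
    (hq : ∀ t, IntegrableOn q (Icc 0 t))
    (hq₀ : ∀ t, 0 ≤ t → 0 ≤ q t) (hy : ∀ t, IntegrableOn y (Icc 0 t)) (hy₀ : ∀ t, 0 ≤ t → 0 ≤ y t)
    (hy_top : ∫⁻ t in Ioi 0, ENNReal.ofReal (y t) = ⊤)
    (hbound : ∀ t, 0 ≤ t → ∫ s in 0..t, k (∫ r in s..t, y r) * q s ≤ 1) {M : ℝ} (hM : 0 < M)
    (hkM : 0 < k M) :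
    limsup (fun t ↦ (∫ s in 0..t, q s) / ∫ s in 0..t, y s) atTop ≤ 1 / ∫ u in 0..M, k u := by
  have hq' := locallyIntegrable_indicator_Ici hq
  have hy' := locallyIntegrable_indicator_Ici hy
  have hy'₀ : 0 ≤ (Ici 0).indicator y := indicator_nonneg hy₀
  have hratio : (fun t ↦ (∫ s in 0..t, q s) / ∫ s in 0..t, y s) =ᶠ[atTop]
      fun t ↦ (∫ s in 0..t, (Ici 0).indicator q s) / ∫ s in 0..t, (Ici 0).indicator y s := by
    filter_upwards [eventually_ge_atTop 0] with t ht
    simp only [intervalIntegral.integral_indicator_Ici_of_nonneg le_rfl ht]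
  rw [limsup_congr hratio]
  refine limsup_integral_div_integral_le_of_locallyIntegrable hk hk_anti hk₀ hq'
    (indicator_nonneg hq₀) hy' hy'₀ (fun t ht ↦ ?_)
    (tendsto_integral_atTop_of_lintegral_Ioi_eq_top hy' hy'₀ ?_) hM hkM
  · refine (intervalIntegral.integral_congr fun s hs ↦ ?_).trans_le (hbound t ht)
    rw [uIcc_of_le ht] at hs
    simp only [intervalIntegral.integral_indicator_Ici_of_nonneg hs.1 ht,
      indicator_of_mem (mem_Ici.2 hs.1)]
  · rw [← hy_top]
    exact setLIntegral_congr_fun measurableSet_Ioi fun t ht ↦ by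
      rw [indicator_of_mem (mem_Ici.2 (le_of_lt ht))]

end RenewalInequality

theorem lintegral_exp_neg_mul_Ioi {g : ℝ} (hg : 0 ≤ g) :
    ∫⁻ u in Ioi 0, ENNReal.ofReal (Real.exp (-u * g)) = (ENNReal.ofReal g)⁻¹ := by
  rcases hg.eq_or_lt with rfl | hg
  · simp
  have hexp : (fun u ↦ Real.exp (-u * g)) = fun u ↦ Real.exp (-g * u) := by
    ext u; ring_nf
  rw [← ofReal_integral_eq_lintegral_ofReal, ← ENNReal.ofReal_inv_of_pos hg, hexp,
    integral_exp_mul_Ioi (neg_lt_zero.2 hg)]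
  · simp
  · rw [hexp]; exact integrableOn_exp_mul_Ioi (neg_lt_zero.2 hg) 0
  · exact ae_of_all _ fun u ↦ (Real.exp_pos _).le

section MomentGeneratingFunction

variable {X : Ω → ℝ} {P : Measure Ω}

theorem antitone_mgf_neg (hX₀ : ∀ᵐ ω ∂P, 0 ≤ X ω)
    (hX : ∀ t, Integrable (fun ω ↦ Real.exp (t * X ω)) P) : Antitone fun u ↦ mgf X P (-u) :=
  fun u v huv ↦ integral_mono_ae (hX _) (hX _) <| by
    filter_upwards [hX₀] with ω hω
    exact Real.exp_le_exp.2 (mul_le_mul_of_nonneg_right (neg_le_neg huv) hω)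

theorem tendsto_ofReal_integral_mgf_neg [IsFiniteMeasure P] (hXm : Measurable X)
    (hX₀ : ∀ᵐ ω ∂P, 0 ≤ X ω) (hX : ∀ t, Integrable (fun ω ↦ Real.exp (t * X ω)) P) :
    Tendsto (fun M ↦ ENNReal.ofReal (∫ u in 0..M, mgf X P (-u))) atTop
      (𝓝 (∫⁻ ω, (ENNReal.ofReal (X ω))⁻¹ ∂P)) := by
  have hlim : ∫⁻ u in Ioi 0, ENNReal.ofReal (mgf X P (-u)) = ∫⁻ ω, (ENNReal.ofReal (X ω))⁻¹ ∂P :=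
    calc ∫⁻ u in Ioi 0, ENNReal.ofReal (mgf X P (-u))
        = ∫⁻ u in Ioi 0, ∫⁻ ω, ENNReal.ofReal (Real.exp (-u * X ω)) ∂P :=
          lintegral_congr fun u ↦
            ofReal_integral_eq_lintegral_ofReal (hX _) (ae_of_all _ fun ω ↦ (Real.exp_pos _).le)
      _ = ∫⁻ ω, (∫⁻ u in Ioi 0, ENNReal.ofReal (Real.exp (-u * X ω))) ∂P :=
          lintegral_lintegral_swap (f := fun u ω ↦ ENNReal.ofReal (Real.exp (-u * X ω)))
            (ENNReal.measurable_ofReal.comp (Real.measurable_exp.comp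
              (measurable_fst.neg.mul (hXm.comp measurable_snd)))).aemeasurable
      _ = ∫⁻ ω, (ENNReal.ofReal (X ω))⁻¹ ∂P := lintegral_congr_ae <| by
          filter_upwards [hX₀] with ω hω using lintegral_exp_neg_mul_Ioi hω
  rw [← hlim]
  refine (tendsto_setLIntegral_Ioc_atTop _ 0).congr' ?_
  filter_upwards [eventually_ge_atTop 0] with M hM
  exact (ofReal_intervalIntegral_eq_setLIntegral hM
    (((continuous_mgf hX).comp continuous_neg).intervalIntegrable 0 M) fun u _ ↦ mgf_nonneg).symm

end MomentGeneratingFunction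

theorem le_toReal_inv_of_tendsto {L : ℝ} {K : ℝ → ℝ} {m : ℝ≥0∞} (hK_mono : Monotone K)
    (hK : Tendsto (fun M ↦ ENNReal.ofReal (K M)) atTop (𝓝 m))
    (hL : ∀ᶠ M in atTop, 0 < K M ∧ L ≤ 1 / K M) : L ≤ (m⁻¹).toReal := by
  obtain ⟨M₀, hKM₀, -⟩ := hL.exists
  have hK_mono' : Monotone fun M ↦ ENNReal.ofReal (K M) := fun _ _ h ↦
    ENNReal.ofReal_le_ofReal (hK_mono h)
  have hm : m ≠ 0 := ((ENNReal.ofReal_pos.2 hKM₀).trans_le (hK_mono'.ge_of_tendsto hK M₀)).ne'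
  rw [← ENNReal.ofReal_le_iff_le_toReal (ENNReal.inv_ne_top.2 hm)]
  refine ge_of_tendsto (tendsto_inv_iff.2 hK) ?_
  filter_upwards [hL] with M ⟨hKM, hLM⟩
  rw [← ENNReal.ofReal_inv_of_pos hKM, ← one_div]
  exact ENNReal.ofReal_le_ofReal hLM

theorem limsup_ratio_le_inv_harmonic_mean_general
    {Ω : Type*} [MeasurableSpace Ω] (P : Measure Ω) [IsProbabilityMeasure P]
    (gs : Ω → ℝ) (hgs : Measurable gs)
    (hrange : ∀ᵐ ω ∂P, gs ω ∈ Set.Icc (0:ℝ) 1)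
    (x y : ℝ → ℝ)
    (hxnn : ∀ t : ℝ, 0 ≤ t → 0 ≤ x t) (hynn : ∀ t : ℝ, 0 ≤ t → 0 ≤ y t)
    (hyloc : ∀ t : ℝ, IntegrableOn y (Set.Icc 0 t))
    (hydiv : (∫⁻ t in Set.Ioi (0:ℝ), ENNReal.ofReal (y t)) = ⊤)
    (hbound : ∀ t : ℝ, 0 ≤ t →
      (∫ s in (0:ℝ)..t,
        (∫ ω, Real.exp (- (gs ω * ∫ r in s..t, y r)) ∂P) * (x s * y s)) ≤ 1) :
    Filter.limsup
        (fun t : ℝ => (∫ s in (0:ℝ)..t, x s * y s) / ∫ s in (0:ℝ)..t, y s) atTop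
      ≤ ((∫⁻ ω, (ENNReal.ofReal (gs ω))⁻¹ ∂P)⁻¹).toReal := by
  by_cases hxy : ∀ t, IntegrableOn (fun s ↦ x s * y s) (Icc 0 t)
  swap
  -- If `x y` is not integrable on some `[0, t₀]`, the numerator is the junk value `0` from `t₀` on.
  · obtain ⟨t₀, ht₀⟩ := not_forall.1 hxy
    rw [limsup_congr ((intervalIntegral.eventually_integral_eq_zero_of_not_integrableOn ht₀).mono
      fun t ht ↦ by rw [ht, zero_div]), limsup_const]
    exact ENNReal.toReal_nonneg
  have hint : ∀ t, Integrable (fun ω ↦ Real.exp (t * gs ω)) P := fun _ ↦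
    integrable_exp_mul_of_mem_Icc hgs.aemeasurable hrange
  have hgs₀ : ∀ᵐ ω ∂P, 0 ≤ gs ω := hrange.mono fun _ h ↦ h.1
  have hk : Continuous fun u ↦ mgf gs P (-u) := (continuous_mgf hint).comp continuous_neg
  have hbound' : ∀ t, 0 ≤ t → ∫ s in 0..t, mgf gs P (-∫ r in s..t, y r) * (x s * y s) ≤ 1 := by
    intro t ht
    convert hbound t ht using 4 with s
    simp only [mgf, neg_mul, mul_comm (∫ r in s..t, y r)]
  refine le_toReal_inv_of_tendsto (fun _ _ h ↦ intervalIntegral.integral_le_integral_of_le_right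
    hk.locallyIntegrable (fun _ ↦ mgf_nonneg) h) (tendsto_ofReal_integral_mgf_neg hgs hgs₀ hint) ?_
  filter_upwards [eventually_gt_atTop 0] with M hM
  exact ⟨intervalIntegral.intervalIntegral_pos_of_pos_on (hk.intervalIntegrable 0 M)
      (fun _ _ ↦ mgf_pos (hint _)) hM,
    limsup_integral_div_integral_le hk (antitone_mgf_neg hgs₀ hint) (fun _ ↦ mgf_nonneg) hxy
      (fun t ht ↦ mul_nonneg (hxnn t ht) (hynn t ht)) hyloc hynn hydiv hbound' hM
      (mgf_pos (hint _))⟩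

/-- If `ℙ(γ* = 0) = 0`, `∫₀^∞ y = ∞` and
`∫₀ᵗ 𝔼[exp(−γ* ∫ₛᵗ y)] x y ds ≤ 1` for all `t`, then
`limsup_{t→∞} (∫₀ᵗ x y)/(∫₀ᵗ y) ≤ 1/𝔼[1/γ*]` (interpreted as `0` when `𝔼[1/γ*] = ∞`). -/
theorem limsup_ratio_le_inv_harmonic_mean
    {Ω : Type*} [MeasurableSpace Ω] (P : Measure Ω) [IsProbabilityMeasure P]
    (gs : Ω → ℝ) (hgs : Measurable gs)
    (hrange : ∀ᵐ ω ∂P, gs ω ∈ Set.Icc (0:ℝ) 1)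
    (hzero : P {ω | gs ω = 0} = 0)
    (x y : ℝ → ℝ) (hx : Measurable x) (hy : Measurable y)
    (hxnn : ∀ t : ℝ, 0 ≤ t → 0 ≤ x t) (hynn : ∀ t : ℝ, 0 ≤ t → 0 ≤ y t)
    (hxloc : ∀ t : ℝ, IntegrableOn x (Set.Icc 0 t))
    (hyloc : ∀ t : ℝ, IntegrableOn y (Set.Icc 0 t))
    (hydiv : (∫⁻ t in Set.Ioi (0:ℝ), ENNReal.ofReal (y t)) = ⊤)
    (hbound : ∀ t : ℝ, 0 ≤ t →
      (∫ s in (0:ℝ)..t,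
        (∫ ω, Real.exp (- (gs ω * ∫ r in s..t, y r)) ∂P) * (x s * y s)) ≤ 1) :
    Filter.limsup
        (fun t : ℝ => (∫ s in (0:ℝ)..t, x s * y s) / ∫ s in (0:ℝ)..t, y s) atTop
      ≤ ((∫⁻ ω, (ENNReal.ofReal (gs ω))⁻¹ ∂P)⁻¹).toReal :=
  limsup_ratio_le_inv_harmonic_mean_general P gs hgs hrange x y hxnn hynn hyloc hydiv hbound
end
end
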